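/- arXiv:2304.14763 — 13 statements merged into one kernel-verified Lean document; each statement's English description precedes it below -/
import Mathlib

section
/- Let U be an open set in ℝⁿ and let Φ be an interval function on U (a real-valued function on closed axis-parallel boxes contained in U that is additive over finite partitions of a box into boxes with pairwise disjoint interiors). If the upper density D̄_Φ(x) = limsup_{x ∈ Q, δ(Q)→0} Φ(Q)/m(Q) (limsup over boxes Q ⊂ U containing x with diameter δ(Q) tending to 0) is finite at every point of U and is locally Lebesgue integrable on U, then for every box Q ⊂ U one has Φ(Q) ≤ ∫_Q D̄_Φ(x) dx. -/
open MeasureTheory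

/-- A (nondegenerate) closed axis-parallel box in `ℝⁿ`. -/
def IsBox {n : ℕ} (Q : Set (Fin n → ℝ)) : Prop :=
  ∃ a b : Fin n → ℝ, (∀ i, a i < b i) ∧ Q = Set.Icc a b

/-- A finite partition of a box into boxes with pairwise disjoint interiors. -/
def IsBoxPartition {n : ℕ} (Q : Set (Fin n → ℝ)) {m : ℕ}
    (P : Fin m → Set (Fin n → ℝ)) : Prop :=
  (∀ i, IsBox (P i)) ∧ (⋃ i, P i) = Q ∧
    Pairwise fun i j => Disjoint (interior (P i)) (interior (P j))

/-- An interval function on an open set `U`: a real-valued function on closed axis-parallel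
boxes contained in `U` that is additive over finite partitions of a box into boxes with
pairwise disjoint interiors. -/
def IsIntervalFunction {n : ℕ} (U : Set (Fin n → ℝ)) (Φ : Set (Fin n → ℝ) → ℝ) : Prop :=
  ∀ Q : Set (Fin n → ℝ), IsBox Q → Q ⊆ U →
    ∀ (m : ℕ) (P : Fin m → Set (Fin n → ℝ)), IsBoxPartition Q P →
      Φ Q = ∑ i, Φ (P i)

/-- The upper density of an interval function at a point:
`limsup_{x ∈ Q, δ(Q) → 0} Φ(Q)/m(Q) = inf_{ε>0} sup {Φ(Q)/m(Q) : x ∈ Q ⊆ U, δ(Q) ≤ ε}`,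
with values in `[-∞, +∞]`. -/
noncomputable def upperDensity {n : ℕ} (U : Set (Fin n → ℝ)) (Φ : Set (Fin n → ℝ) → ℝ)
    (x : Fin n → ℝ) : EReal :=
  ⨅ (ε : ℝ) (_ : 0 < ε),
    ⨆ (Q : Set (Fin n → ℝ)) (_ : IsBox Q ∧ x ∈ Q ∧ Q ⊆ U ∧ Metric.diam Q ≤ ε),
      ((Φ Q / (volume Q).toReal : ℝ) : EReal)

/-- The lower density of an interval function at a point:
`liminf_{x ∈ Q, δ(Q) → 0} Φ(Q)/m(Q) = sup_{ε>0} inf {Φ(Q)/m(Q) : x ∈ Q ⊆ U, δ(Q) ≤ ε}`,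
with values in `[-∞, +∞]`. -/
noncomputable def lowerDensity {n : ℕ} (U : Set (Fin n → ℝ)) (Φ : Set (Fin n → ℝ) → ℝ)
    (x : Fin n → ℝ) : EReal :=
  ⨆ (ε : ℝ) (_ : 0 < ε),
    ⨅ (Q : Set (Fin n → ℝ)) (_ : IsBox Q ∧ x ∈ Q ∧ Q ⊆ U ∧ Metric.diam Q ≤ ε),
      ((Φ Q / (volume Q).toReal : ℝ) : EReal)

/-- `Φ` has finite density `L` at `x` (relative to `U`): `Φ(Q)/m(Q) → L` as boxes
`Q ⊆ U` containing `x` have diameter tending to `0`. -/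
def HasBoxDensityAt {n : ℕ} (U : Set (Fin n → ℝ)) (Φ : Set (Fin n → ℝ) → ℝ)
    (L : ℝ) (x : Fin n → ℝ) : Prop :=
  ∀ ε > 0, ∃ τ > 0, ∀ Q : Set (Fin n → ℝ), IsBox Q → x ∈ Q → Q ⊆ U →
    Metric.diam Q ≤ τ → |Φ Q / (volume Q).toReal - L| ≤ ε

/-!
Suppose `Φ(Q₀) > ∫_{Q₀} D`. By the Vitali–Carathéodory theorem there is a lower semicontinuous
`g > D` with `∫_{Q₀} g < Φ(Q₀)`. The boxes `Q ⊆ Q₀` with `∫_Q g < Φ(Q)` are inherited by one half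
under bisection (both `Φ` and the integral are additive), so repeated bisection produces such
boxes of arbitrarily small diameter around a single point `x`. Choose `D(x) < t < g(x)`. For a
small enough such box `Q ∋ x`, the definition of the upper density gives `Φ(Q) < t m(Q)`, while
`g > t` on `Q` by lower semicontinuity, so `t m(Q) ≤ ∫_Q g < Φ(Q)`, a contradiction.
-/

open Set Function Filter Topology

section Boxes

variable {ι : Type*} [DecidableEq ι]

lemma Icc_union_Icc_update {α : Type*} [LinearOrder α] {a b : ι → α} {i : ι} {c : α}
    (hc : c ∈ Icc (a i) (b i)) :
    Icc a (update b i c) ∪ Icc (update a i c) b = Icc a b := by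
  refine Subset.antisymm (union_subset (Icc_subset_Icc le_rfl ?_) (Icc_subset_Icc ?_ le_rfl))
    fun x hx => ?_
  · exact update_le_iff.2 ⟨hc.2, fun _ _ => le_rfl⟩
  · exact le_update_iff.2 ⟨hc.1, fun _ _ => le_rfl⟩
  · rcases le_total (x i) c with h | h
    · exact Or.inl ⟨hx.1, le_update_iff.2 ⟨h, fun j _ => hx.2 j⟩⟩
    · exact Or.inr ⟨update_le_iff.2 ⟨h, fun j _ => hx.1 j⟩, hx.2⟩

lemma interior_Icc_update_subset {a b : ι → ℝ} {i : ι} {c : ℝ} :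
    interior (Icc a (update b i c)) ⊆ {x | x i < c} ∧
      interior (Icc (update a i c) b) ⊆ {x | c < x i} := by
  have hpre : ∀ s : Set ℝ, interior ((eval i : (ι → ℝ) → ℝ) ⁻¹' s) = eval i ⁻¹' interior s :=
    fun s => ((isOpenMap_eval (X := fun _ : ι => ℝ) i).preimage_interior_eq_interior_preimage
      (continuous_apply i) s).symm
  constructor
  · calc interior (Icc a (update b i c)) ⊆ interior (eval i ⁻¹' Iic c) :=
          interior_mono fun x hx => by simpa using hx.2 i
      _ = {x | x i < c} := by rw [hpre, interior_Iic]; rfl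
  · calc interior (Icc (update a i c) b) ⊆ interior (eval i ⁻¹' Ici c) :=
          interior_mono fun x hx => by simpa using hx.1 i
      _ = {x | c < x i} := by rw [hpre, interior_Ici]; rfl

lemma disjoint_interior_Icc_update {a b : ι → ℝ} {i : ι} {c : ℝ} :
    Disjoint (interior (Icc a (update b i c))) (interior (Icc (update a i c) b)) :=
  disjoint_left.2 fun x hl hr =>
    lt_asymm (a := x i) (interior_Icc_update_subset.1 hl) (interior_Icc_update_subset.2 hr)

lemma lt_update_of_lt {a b : ι → ℝ} (hab : ∀ j, a j < b j) {i : ι} {c : ℝ} (hc : a i < c) (j : ι) :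
    a j < update b i c j := by
  rcases eq_or_ne j i with rfl | hj <;> simp [*]

lemma update_lt_of_lt {a b : ι → ℝ} (hab : ∀ j, a j < b j) {i : ι} {c : ℝ} (hc : c < b i) (j : ι) :
    update a i c j < b j := by
  rcases eq_or_ne j i with rfl | hj <;> simp [*]

variable [Fintype ι]

lemma setIntegral_Icc_eq_add_update {E : Type*} [NormedAddCommGroup E] [NormedSpace ℝ E]
    {f : (ι → ℝ) → E} {a b : ι → ℝ} {i : ι} {c : ℝ} (hc : c ∈ Icc (a i) (b i))
    (hf : IntegrableOn f (Icc a b)) :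
    ∫ x in Icc a b, f x =
      (∫ x in Icc a (update b i c), f x) + ∫ x in Icc (update a i c) b, f x := by
  rw [← Icc_union_Icc_update hc] at hf ⊢
  refine setIntegral_union₀ ?_ measurableSet_Icc.nullMeasurableSet hf.left_of_union
    hf.right_of_union
  have hsub : Icc a (update b i c) ∩ Icc (update a i c) b ⊆ Icc (update a i c) (update b i c) :=
    fun x hx => ⟨hx.2.1, hx.1.2⟩
  refine measure_mono_null hsub ?_
  rw [Real.volume_Icc_pi]
  exact Finset.prod_eq_zero (Finset.mem_univ i) (by simp)

end Boxes

section Bisection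

variable {ι : Type*} [DecidableEq ι]

def IsBisectionHereditary (p : (ι → ℝ) → (ι → ℝ) → Prop) : Prop :=
  ∀ a b i, (∀ j, a j < b j) → p a b →
    p a (update b i ((a i + b i) / 2)) ∨ p (update a i ((a i + b i) / 2)) b

namespace IsBisectionHereditary

variable {p : (ι → ℝ) → (ι → ℝ) → Prop} {a b : ι → ℝ}

lemma exists_half (hp : IsBisectionHereditary p) (hab : ∀ j, a j < b j) (h : p a b) (i : ι) :
    ∃ a' b', (∀ j, a' j < b' j) ∧ p a' b' ∧ Icc a' b' ⊆ Icc a b ∧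
      b' - a' = update (b - a) i (2⁻¹ * (b i - a i)) := by
  have hm : (a i + b i) / 2 ∈ Ioo (a i) (b i) := by constructor <;> linarith [hab i]
  have hunion := Icc_union_Icc_update (Ioo_subset_Icc_self hm)
  rcases hp a b i hab h with h' | h'
  · refine ⟨a, _, lt_update_of_lt hab hm.1, h', hunion ▸ subset_union_left, ?_⟩
    ext j
    rcases eq_or_ne j i with rfl | hj
    · simp only [Pi.sub_apply, update_self]; ring
    · simp [hj]
  · refine ⟨_, b, update_lt_of_lt hab hm.2, h', hunion ▸ subset_union_right, ?_⟩
    ext j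
    rcases eq_or_ne j i with rfl | hj
    · simp only [Pi.sub_apply, update_self]; ring
    · simp [hj]

lemma exists_halved [Fintype ι] (hp : IsBisectionHereditary p) (hab : ∀ j, a j < b j)
    (h : p a b) :
    ∃ a' b', (∀ j, a' j < b' j) ∧ p a' b' ∧ Icc a' b' ⊆ Icc a b ∧
      b' - a' = (2⁻¹ : ℝ) • (b - a) := by
  suffices ∀ s : Finset ι, ∃ a' b', (∀ j, a' j < b' j) ∧ p a' b' ∧ Icc a' b' ⊆ Icc a b ∧
      b' - a' = s.piecewise ((2⁻¹ : ℝ) • (b - a)) (b - a) by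
    simpa using this Finset.univ
  intro s
  induction s using Finset.induction_on with
  | empty => exact ⟨a, b, hab, h, subset_rfl, by simp⟩
  | insert i s hi ih =>
    obtain ⟨a₁, b₁, hab₁, h₁, hsub₁, hside₁⟩ := ih
    obtain ⟨a₂, b₂, hab₂, h₂, hsub₂, hside₂⟩ := hp.exists_half hab₁ h₁ i
    have hside₁i : b₁ i - a₁ i = b i - a i := by
      simpa [Finset.piecewise_eq_of_notMem _ _ _ hi] using congrFun hside₁ i
    refine ⟨a₂, b₂, hab₂, h₂, hsub₂.trans hsub₁, ?_⟩
    rw [hside₂, Finset.piecewise_insert, ← hside₁, hside₁i]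
    rfl

lemma exists_mem_forall_dist_lt [Fintype ι] (hp : IsBisectionHereditary p)
    (hab : ∀ j, a j < b j) (h : p a b) :
    ∃ x ∈ Icc a b, ∀ δ > 0, ∃ a' b', (∀ j, a' j < b' j) ∧ p a' b' ∧ Icc a' b' ⊆ Icc a b ∧
      x ∈ Icc a' b' ∧ dist a' b' < δ := by
  let T := {c : (ι → ℝ) × (ι → ℝ) // (∀ j, c.1 j < c.2 j) ∧ p c.1 c.2}
  have hstep : ∀ c : T, ∃ c' : T, Icc c'.1.1 c'.1.2 ⊆ Icc c.1.1 c.1.2 ∧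
      c'.1.2 - c'.1.1 = (2⁻¹ : ℝ) • (c.1.2 - c.1.1) := fun c =>
    let ⟨a', b', hab', h', hsub, hside⟩ := hp.exists_halved c.2.1 c.2.2
    ⟨⟨(a', b'), hab', h'⟩, hsub, hside⟩
  choose next hnext_sub hnext_side using hstep
  let c : ℕ → T := fun k => next^[k] ⟨(a, b), hab, h⟩
  let K : ℕ → Set (ι → ℝ) := fun k => Icc (c k).1.1 (c k).1.2
  have hK_succ : ∀ k, K (k + 1) ⊆ K k := fun k => by
    simpa only [K, c, iterate_succ_apply'] using hnext_sub (c k)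
  have hK_sub : ∀ k, K k ⊆ Icc a b := fun k => antitone_nat_of_succ_le hK_succ (Nat.zero_le k)
  have hside : ∀ k, (c k).1.2 - (c k).1.1 = (2⁻¹ : ℝ) ^ k • (b - a) := by
    intro k
    induction k with
    | zero => simp [c]
    | succ k ih =>
      simp only [c, iterate_succ_apply'] at ih ⊢
      rw [hnext_side, ih, smul_smul, pow_succ']
  have hdist : ∀ k, dist (c k).1.1 (c k).1.2 = (2⁻¹ : ℝ) ^ k * dist a b := by
    intro k
    rw [dist_comm, dist_eq_norm, hside, norm_smul, ← dist_eq_norm, dist_comm]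
    norm_num
  obtain ⟨x, hx⟩ := IsCompact.nonempty_iInter_of_sequence_nonempty_isCompact_isClosed K hK_succ
    (fun k => nonempty_Icc.2 fun j => ((c k).2.1 j).le) isCompact_Icc fun _ => isClosed_Icc
  rw [mem_iInter] at hx
  refine ⟨x, hx 0, fun δ hδ => ?_⟩
  have hlim : Tendsto (fun k => (2⁻¹ : ℝ) ^ k * dist a b) atTop (𝓝 0) := by
    simpa using (tendsto_pow_atTop_nhds_zero_of_lt_one (r := (2⁻¹ : ℝ)) (by norm_num)
      (by norm_num)).mul_const (dist a b)
  obtain ⟨k, hk⟩ := (hlim.eventually (gt_mem_nhds hδ)).exists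
  exact ⟨_, _, (c k).2.1, (c k).2.2, hK_sub k, hx k, hdist k ▸ hk⟩

end IsBisectionHereditary

end Bisection

lemma mul_measureReal_le_setIntegral_toReal {X : Type*} [MeasurableSpace X] {μ : Measure X}
    {s : Set X} {g : X → EReal} {t : ℝ} (hs : MeasurableSet s) (hμs : μ s ≠ ⊤)
    (hg : IntegrableOn (fun x => (g x).toReal) s μ) (hgt : ∀ x ∈ s, (t : EReal) < g x)
    (htop : ∀ᵐ x ∂μ.restrict s, g x < ⊤) :
    t * μ.real s ≤ ∫ x in s, (g x).toReal ∂μ := by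
  have hle : ∀ᵐ x ∂μ.restrict s, t ≤ (g x).toReal := by
    filter_upwards [htop, ae_restrict_mem hs] with x hx hxs
    simpa using EReal.toReal_le_toReal (hgt x hxs).le (EReal.coe_ne_bot t) hx.ne
  calc t * μ.real s = ∫ _ in s, t ∂μ := by rw [setIntegral_const, smul_eq_mul, mul_comm]
    _ ≤ ∫ x in s, (g x).toReal ∂μ := setIntegral_mono_ae_restrict (integrableOn_const hμs) hg hle

section IntervalFunction

variable {n : ℕ} {U : Set (Fin n → ℝ)} {Φ : Set (Fin n → ℝ) → ℝ}

lemma IsIntervalFunction.map_Icc_eq_add_update (hΦ : IsIntervalFunction U Φ)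
    {a b : Fin n → ℝ} (hab : ∀ j, a j < b j) (hU : Icc a b ⊆ U) {i : Fin n} {c : ℝ}
    (hc : c ∈ Ioo (a i) (b i)) :
    Φ (Icc a b) = Φ (Icc a (update b i c)) + Φ (Icc (update a i c) b) := by
  have hpart : IsBoxPartition (Icc a b) ![Icc a (update b i c), Icc (update a i c) b] := by
    refine ⟨Fin.forall_fin_two.2 ⟨⟨a, _, lt_update_of_lt hab hc.1, rfl⟩,
      ⟨_, b, update_lt_of_lt hab hc.2, rfl⟩⟩, ?_, ?_⟩
    · rw [← Icc_union_Icc_update (Ioo_subset_Icc_self hc)]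
      ext x
      simp [Fin.exists_fin_two]
    · intro j k hjk
      fin_cases j <;> fin_cases k
      · exact absurd rfl hjk
      · exact disjoint_interior_Icc_update
      · exact disjoint_interior_Icc_update.symm
      · exact absurd rfl hjk
  simpa [Fin.sum_univ_two] using hΦ _ ⟨a, b, hab, rfl⟩ hU 2 _ hpart

lemma IsIntervalFunction.isBisectionHereditary_setIntegral_lt (hΦ : IsIntervalFunction U Φ)
    {Q₀ : Set (Fin n → ℝ)} (hQ₀ : Q₀ ⊆ U) {G : (Fin n → ℝ) → ℝ} (hG : IntegrableOn G Q₀) :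
    IsBisectionHereditary fun a b => Icc a b ⊆ Q₀ ∧ ∫ x in Icc a b, G x < Φ (Icc a b) := by
  rintro a b i hab ⟨hsub, hlt⟩
  have hc : (a i + b i) / 2 ∈ Ioo (a i) (b i) := by constructor <;> linarith [hab i]
  have hunion := Icc_union_Icc_update (Ioo_subset_Icc_self hc)
  rw [hΦ.map_Icc_eq_add_update hab (hsub.trans hQ₀) hc,
    setIntegral_Icc_eq_add_update (Ioo_subset_Icc_self hc) (hG.mono_set hsub)] at hlt
  rcases lt_or_ge (∫ x in Icc a (update b i ((a i + b i) / 2)), G x)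
      (Φ (Icc a (update b i ((a i + b i) / 2)))) with h | h
  · exact Or.inl ⟨(hunion ▸ subset_union_left).trans hsub, h⟩
  · exact Or.inr ⟨(hunion ▸ subset_union_right).trans hsub, by linarith⟩

lemma exists_forall_div_lt_of_upperDensity_lt {x : Fin n → ℝ} {t : ℝ}
    (h : upperDensity U Φ x < t) :
    ∃ ε > 0, ∀ Q, IsBox Q → x ∈ Q → Q ⊆ U → Metric.diam Q ≤ ε →
      Φ Q / (volume Q).toReal < t := by
  obtain ⟨ε, hε⟩ := iInf_lt_iff.1 h
  obtain ⟨hε_pos, hsup⟩ := iInf_lt_iff.1 hε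
  refine ⟨ε, hε_pos, fun Q hQ hxQ hQU hdiam => EReal.coe_lt_coe_iff.1 ?_⟩
  exact (le_iSup₂ (f := fun Q (_ : IsBox Q ∧ x ∈ Q ∧ Q ⊆ U ∧ Metric.diam Q ≤ ε) =>
    ((Φ Q / (volume Q).toReal : ℝ) : EReal)) Q ⟨hQ, hxQ, hQU, hdiam⟩).trans_lt hsup

end IntervalFunction

theorem intervalFunction_le_integral_upperDensity_general {n : ℕ}
    (U : Set (Fin n → ℝ))
    (Φ : Set (Fin n → ℝ) → ℝ) (hΦ : IsIntervalFunction U Φ)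
    (D : (Fin n → ℝ) → ℝ)
    (hfin : ∀ x ∈ U, upperDensity U Φ x = (D x : EReal))
    (hloc : LocallyIntegrableOn D U volume) :
    ∀ Q : Set (Fin n → ℝ), IsBox Q → Q ⊆ U → Φ Q ≤ ∫ x in Q, D x := by
  rintro _ ⟨a₀, b₀, hab₀, rfl⟩ hQU
  by_contra! hlt
  obtain ⟨g, hDg, hg_lsc, hg_int, hg_top, hg_lt⟩ := exists_lt_lowerSemicontinuous_integral_lt
    (μ := volume.restrict (Icc a₀ b₀)) D (hloc.integrableOn_compact_subset hQU isCompact_Icc)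
    (sub_pos.2 hlt)
  obtain ⟨x, hx, hsmall⟩ := (hΦ.isBisectionHereditary_setIntegral_lt hQU
    hg_int).exists_mem_forall_dist_lt hab₀ ⟨subset_rfl, by linarith⟩
  obtain ⟨t, hDt, htg⟩ := EReal.exists_between_coe_real (hDg x)
  obtain ⟨ε, hε, hΦt⟩ := exists_forall_div_lt_of_upperDensity_lt (hfin x (hQU hx) ▸ hDt)
  obtain ⟨r, hr, hgt⟩ := Metric.eventually_nhds_iff.1 (hg_lsc x t htg)
  obtain ⟨a, b, hab, ⟨hsub, hbad⟩, -, hxab, hdist⟩ := hsmall (min ε r) (lt_min hε hr)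
  have hvol : 0 < volume.real (Icc a b) := by
    rw [measureReal_def, Real.volume_Icc_pi_toReal fun j => (hab j).le]
    exact Finset.prod_pos fun j _ => sub_pos.2 (hab j)
  have hnear : ∀ y ∈ Icc a b, ∀ z ∈ Icc a b, dist y z < min ε r := fun y hy z hz =>
    (Real.dist_le_of_mem_pi_Icc hy hz).trans_lt hdist
  have hdiam : Metric.diam (Icc a b) ≤ ε := Metric.diam_le_of_forall_dist_le hε.le
    fun y hy z hz => (hnear y hy z hz).le.trans (min_le_left _ _)
  have hΦ_lt : Φ (Icc a b) < t * volume.real (Icc a b) :=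
    (div_lt_iff₀ hvol).1 (hΦt _ ⟨a, b, hab, rfl⟩ hxab (hsub.trans hQU) hdiam)
  have hle : t * volume.real (Icc a b) ≤ ∫ z in Icc a b, (g z).toReal :=
    mul_measureReal_le_setIntegral_toReal measurableSet_Icc isCompact_Icc.measure_lt_top.ne
      (IntegrableOn.mono_set hg_int hsub)
      (fun z hz => hgt ((hnear z hz x hxab).trans_le (min_le_right _ _)))
      (ae_restrict_of_ae_restrict_of_subset hsub hg_top)
  linarith

/-- **Theorem (upper-density inequality).** If an interval function Φ on an open set
`U ⊆ ℝⁿ` has a finite upper density `D̄_Φ(x) = D x` at every point of `U`, and `D` is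
locally Lebesgue integrable on `U`, then `Φ(Q) ≤ ∫_Q D̄_Φ(x) dx` for every box `Q ⊆ U`. -/
theorem intervalFunction_le_integral_upperDensity {n : ℕ}
    (U : Set (Fin n → ℝ)) (hU : IsOpen U)
    (Φ : Set (Fin n → ℝ) → ℝ) (hΦ : IsIntervalFunction U Φ)
    (D : (Fin n → ℝ) → ℝ)
    (hfin : ∀ x ∈ U, upperDensity U Φ x = (D x : EReal))
    (hloc : LocallyIntegrableOn D U volume) :
    ∀ Q : Set (Fin n → ℝ), IsBox Q → Q ⊆ U → Φ Q ≤ ∫ x in Q, D x :=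
  intervalFunction_le_integral_upperDensity_general U Φ hΦ D hfin hloc
end

section
/- Let U be an open set in ℝⁿ and let Φ be an interval function on U (a real-valued function on closed axis-parallel boxes contained in U that is additive over finite partitions of a box into boxes with pairwise disjoint interiors). If the lower density D_Φ(x) = liminf_{x ∈ Q, δ(Q)→0} Φ(Q)/m(Q) (liminf over boxes Q ⊂ U containing x with diameter δ(Q) tending to 0) is finite at every point of U and is locally Lebesgue integrable on U, then for every box Q ⊂ U one has Φ(Q) ≥ ∫_Q D_Φ(x) dx. -/
/-!
Fix ε > 0. At each point x of the box, the lower density yields a radius below which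
Φ(J) ≥ (D(x) - ε) m(J) for every sub-box J containing x. Being Lebesgue integrable on the box,
D is Henstock–Kurzweil integrable with the same integral, so the Riemann sums
∑ D(x_J) m(J) over tagged Henstock partitions subordinate to that gauge converge to ∫_Q D.
By additivity Φ(Q) = ∑ Φ(J) ≥ ∑ (D(x_J) - ε) m(J), and in the limit Φ(Q) ≥ ∫_Q D - ε m(Q).
-/

open MeasureTheory

open BoxIntegral

namespace BoxIntegral

variable {ι : Type*}

theorem Box.closure_coe (I : Box ι) : closure (I : Set (ι → ℝ)) = Box.Icc I := by
  rw [Box.coe_eq_pi, closure_pi_set, Box.Icc_eq_pi]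
  exact Set.pi_congr rfl fun i _ => closure_Ioc (I.lower_lt_upper i).ne

theorem Prepartition.IsPartition.iUnion_Icc {I : Box ι} {π : Prepartition I}
    (hπ : π.IsPartition) : ⋃ J ∈ π.boxes, Box.Icc J = Box.Icc I := by
  rw [← Box.closure_coe, ← hπ.iUnion_eq, Prepartition.iUnion_def', Finset.closure_biUnion]
  simp only [Box.closure_coe]

variable [Fintype ι]

theorem Box.interior_Icc_subset_coe (I : Box ι) : interior (Box.Icc I) ⊆ I := by
  rw [Box.Icc_eq_pi, interior_pi_set Set.finite_univ, Box.coe_eq_pi]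
  simp_rw [interior_Icc]
  exact Set.pi_mono fun i _ => Set.Ioo_subset_Ioc_self

theorem IntegrationParams.eventually_isSubordinate_isHenstock {l : IntegrationParams}
    (hl : l.bRiemann = false) (I : Box ι) (r : (ι → ℝ) → Set.Ioi (0 : ℝ)) :
    ∀ᶠ π in l.toFilteriUnion I ⊤, π.IsSubordinate r ∧ (l.bHenstock → π.IsHenstock) := by
  refine Filter.mem_of_superset ((l.hasBasis_toFilteriUnion_top I).mem_of_mem
    (i := fun _ => r) fun _ => l.rCond_of_bRiemann_eq_false hl) ?_
  rintro π ⟨c, hπ, -⟩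
  exact ⟨hπ.isSubordinate, hπ.isHenstock⟩

theorem integralSum_volume_sub_mul {I : Box ι} (f : (ι → ℝ) → ℝ) (c : ℝ)
    {π : TaggedPrepartition I} (hπ : π.IsPartition) :
    integralSum f volume.toBoxAdditive.toSMul π - c * volume.real (Box.Icc I) =
      ∑ J ∈ π.boxes, (f (π.tag J) - c) * volume.real (Box.Icc J) := by
  simp only [← measureReal_congr (Box.coe_ae_eq_Icc _), ← Measure.toBoxAdditive_apply,
    ← volume.toBoxAdditive.sum_partition_boxes le_top hπ, integralSum,
    BoxAdditiveMap.toSMul_apply, smul_eq_mul, Finset.mul_sum, ← Finset.sum_sub_distrib, sub_mul,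
    mul_comm]

theorem setIntegral_Icc_le_of_locally_le {I : Box ι} {f : (ι → ℝ) → ℝ}
    (hf : IntegrableOn f (Box.Icc I)) {F : Box ι → ℝ}
    (hF : ∀ π : Prepartition I, π.IsPartition → ∑ J ∈ π.boxes, F J = F I)
    (hfF : ∀ ε > 0, ∀ x ∈ Box.Icc I, ∃ δ > 0, ∀ J ≤ I, x ∈ Box.Icc J →
      Metric.diam (Box.Icc J) ≤ δ → (f x - ε) * volume.real (Box.Icc J) ≤ F J) :
    ∫ x in Box.Icc I, f x ≤ F I := by
  have hint : HasIntegral I IntegrationParams.Henstock f volume.toBoxAdditive.toSMul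
      (∫ x in Box.Icc I, f x) := by
    rw [← setIntegral_congr_set I.coe_ae_eq_Icc]
    exact (hf.mono_set Box.coe_subset_Icc).hasBoxIntegral _ rfl
  set V := volume.real (Box.Icc I)
  have key : ∀ ε > 0, (∫ x in Box.Icc I, f x) - ε * V ≤ F I := by
    intro ε hε
    have hgauge : ∀ x, ∃ δ : Set.Ioi (0 : ℝ), x ∈ Box.Icc I → ∀ J ≤ I, x ∈ Box.Icc J →
        Metric.diam (Box.Icc J) ≤ 2 * δ → (f x - ε) * volume.real (Box.Icc J) ≤ F J := by
      intro x
      by_cases hx : x ∈ Box.Icc I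
      · obtain ⟨δ, hδ, h⟩ := hfF ε hε x hx
        exact ⟨⟨δ / 2, half_pos hδ⟩, fun _ J hJ hxJ hdiam => h J hJ hxJ (by linarith)⟩
      · exact ⟨⟨1, Set.mem_Ioi.2 one_pos⟩, fun h => absurd h hx⟩
    choose r hr using hgauge
    refine le_of_tendsto (hint.tendsto.sub_const (ε * V)) ?_
    filter_upwards [IntegrationParams.eventually_isPartition _ I,
      IntegrationParams.eventually_isSubordinate_isHenstock rfl I r] with π hπ ⟨hsub, hH⟩
    rw [integralSum_volume_sub_mul f ε hπ, ← hF _ hπ]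
    exact Finset.sum_le_sum fun J hJ => hr _ (π.tag_mem_Icc J) J (π.le_of_mem hJ)
      (hH rfl J hJ) (hsub.diam_le hJ)
  have hV : 0 ≤ V := measureReal_nonneg
  refine le_of_forall_sub_le fun ε hε =>
    (sub_le_sub_left ?_ _).trans (key (ε / (V + 1)) (by positivity))
  rw [div_mul_eq_mul_div, div_le_iff₀ (by linarith)]
  exact mul_le_mul_of_nonneg_left (le_add_of_nonneg_right zero_le_one) hε.le

theorem Box.isBox_Icc {n : ℕ} (J : Box (Fin n)) : IsBox (Box.Icc J) :=
  ⟨J.lower, J.upper, J.lower_lt_upper, rfl⟩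

theorem Prepartition.IsPartition.isBoxPartition {n : ℕ} {I : Box (Fin n)}
    {π : Prepartition I} (hπ : π.IsPartition) :
    IsBoxPartition (Box.Icc I) fun i => Box.Icc (π.boxes.equivFin.symm i : Box (Fin n)) := by
  refine ⟨fun i => Box.isBox_Icc _, ?_, fun i j hij => ?_⟩
  · rw [← hπ.iUnion_Icc, ← Finset.set_biUnion_coe, Set.biUnion_eq_iUnion]
    exact π.boxes.equivFin.symm.iSup_comp (g := fun J : π.boxes => Box.Icc (J : Box (Fin n)))
  · refine Disjoint.mono (Box.interior_Icc_subset_coe _) (Box.interior_Icc_subset_coe _)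
      (π.disjoint_coe_of_mem (π.boxes.equivFin.symm i).2 (π.boxes.equivFin.symm j).2 ?_)
    exact fun h => hij (π.boxes.equivFin.symm.injective (Subtype.ext h))

end BoxIntegral

theorem IsBox.volume_toReal_pos {n : ℕ} {S : Set (Fin n → ℝ)} (hS : IsBox S) :
    0 < (volume S).toReal := by
  obtain ⟨a, b, hab, rfl⟩ := hS
  rw [Real.volume_Icc_pi_toReal fun i => (hab i).le]
  exact Finset.prod_pos fun i _ => sub_pos.2 (hab i)

theorem exists_forall_le_of_lt_lowerDensity {n : ℕ} {U : Set (Fin n → ℝ)}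
    {Φ : Set (Fin n → ℝ) → ℝ} {x : Fin n → ℝ} {c : ℝ} (hc : (c : EReal) < lowerDensity U Φ x) :
    ∃ τ > 0, ∀ S : Set (Fin n → ℝ), IsBox S → x ∈ S → S ⊆ U → Metric.diam S ≤ τ →
      c * (volume S).toReal ≤ Φ S := by
  simp only [lowerDensity, lt_iSup_iff] at hc
  obtain ⟨τ, hτ, hc⟩ := hc
  refine ⟨τ, hτ, fun S hS hxS hSU hdiam => ?_⟩
  have hlt : (c : EReal) < (Φ S / (volume S).toReal : ℝ) :=
    hc.trans_le (iInf₂_le S ⟨hS, hxS, hSU, hdiam⟩)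
  exact ((lt_div_iff₀ hS.volume_toReal_pos).1 (EReal.coe_lt_coe_iff.1 hlt)).le

theorem IsIntervalFunction.sum_boxes_of_isPartition {n : ℕ} {U : Set (Fin n → ℝ)}
    {Φ : Set (Fin n → ℝ) → ℝ} (hΦ : IsIntervalFunction U Φ) {I : Box (Fin n)}
    (hIU : Box.Icc I ⊆ U) {π : Prepartition I} (hπ : π.IsPartition) :
    ∑ J ∈ π.boxes, Φ (Box.Icc J) = Φ (Box.Icc I) := by
  rw [hΦ _ (Box.isBox_Icc I) hIU _ _ hπ.isBoxPartition, ← Finset.sum_coe_sort π.boxes]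
  exact (π.boxes.equivFin.symm.sum_comp fun J : π.boxes => Φ (Box.Icc (J : Box (Fin n)))).symm

theorem intervalFunction_ge_integral_lowerDensity_general {n : ℕ}
    (U : Set (Fin n → ℝ))
    (Φ : Set (Fin n → ℝ) → ℝ) (hΦ : IsIntervalFunction U Φ)
    (D : (Fin n → ℝ) → ℝ)
    (hfin : ∀ x ∈ U, lowerDensity U Φ x = (D x : EReal))
    (hloc : LocallyIntegrableOn D U volume) :
    ∀ Q : Set (Fin n → ℝ), IsBox Q → Q ⊆ U → ∫ x in Q, D x ≤ Φ Q := by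
  rintro _ ⟨a, b, hab, rfl⟩ hQU
  let I : Box (Fin n) := ⟨a, b, hab⟩
  refine setIntegral_Icc_le_of_locally_le (I := I) (F := fun J => Φ (Box.Icc J))
    (hloc.integrableOn_compact_subset hQU isCompact_Icc)
    (fun π hπ => hΦ.sum_boxes_of_isPartition hQU hπ) fun ε hε x hx => ?_
  have hlt : ((D x - ε : ℝ) : EReal) < lowerDensity U Φ x := by
    rw [hfin x (hQU hx)]
    exact_mod_cast sub_lt_self _ hε
  obtain ⟨τ, hτ, hbound⟩ := exists_forall_le_of_lt_lowerDensity hlt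
  exact ⟨τ, hτ, fun J hJ hxJ hdiam =>
    hbound _ (Box.isBox_Icc J) hxJ ((Box.le_iff_Icc.1 hJ).trans hQU) hdiam⟩

/-- **Theorem (lower-density inequality).** If an interval function Φ on an open set
`U ⊆ ℝⁿ` has a finite lower density `D_Φ(x) = D x` at every point of `U`, and `D` is
locally Lebesgue integrable on `U`, then `Φ(Q) ≥ ∫_Q D_Φ(x) dx` for every box `Q ⊆ U`. -/
theorem intervalFunction_ge_integral_lowerDensity {n : ℕ}
    (U : Set (Fin n → ℝ)) (hU : IsOpen U)
    (Φ : Set (Fin n → ℝ) → ℝ) (hΦ : IsIntervalFunction U Φ)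
    (D : (Fin n → ℝ) → ℝ)
    (hfin : ∀ x ∈ U, lowerDensity U Φ x = (D x : EReal))
    (hloc : LocallyIntegrableOn D U volume) :
    ∀ Q : Set (Fin n → ℝ), IsBox Q → Q ⊆ U → ∫ x in Q, D x ≤ Φ Q :=
  intervalFunction_ge_integral_lowerDensity_general U Φ hΦ D hfin hloc
end

section
/- Let U be an open set in ℝⁿ, Φ an interval function on U (a real-valued function on closed axis-parallel boxes contained in U that is additive over finite partitions of a box into boxes with pairwise disjoint interiors), and f a continuous real-valued function on U. Then the following two statements are equivalent: (i) for every x ∈ U, Φ(Q)/m(Q) → f(x) as boxes Q ⊂ U containing x have diameter tending to 0; (ii) Φ(Q) = ∫_Q f(x) dx for every box Q ⊂ U. -/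
open MeasureTheory

/-!
Subtracting the integral of `f`, which has density `f x` at each `x ∈ U` by continuity, reduces
(i) ⇒ (ii) to showing that an interval function `G` with density `0` everywhere on `U` vanishes
on boxes. If `|G Q| = c · m(Q)` with `c > 0`, additivity over the `2ⁿ` half-boxes of `Q` yields a
half-box `Q'` with `|G Q'| ≥ c · m(Q')`. Iterating gives nested boxes shrinking to a point `x`
with `|G R| / m(R) ≥ c` on arbitrarily small boxes `R ∋ x`, contradicting density `0` at `x`.
-/

open Set Metric

variable {n : ℕ}

theorem exists_mem_forall_diam_le_of_halving {X : Type*} [MetricSpace X] {p : Set X → Prop}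
    (hp : ∀ Q, p Q → IsCompact Q ∧ Q.Nonempty)
    (hhalf : ∀ Q, p Q → ∃ Q' ⊆ Q, diam Q' ≤ diam Q / 2 ∧ p Q')
    {Q : Set X} (hQ : p Q) :
    ∃ x ∈ Q, ∀ τ > 0, ∃ R ⊆ Q, p R ∧ x ∈ R ∧ diam R ≤ τ := by
  choose! F hFsub hFdiam hFp using hhalf
  let S : ℕ → Set X := fun k => F^[k] Q
  have hS_succ : ∀ k, S (k + 1) = F (S k) := fun k => Function.iterate_succ_apply' F k Q
  have hpS : ∀ k, p (S k) := by
    intro k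
    induction k with
    | zero => exact hQ
    | succ k ih => rw [hS_succ]; exact hFp _ ih
  have hSanti : Antitone S :=
    antitone_nat_of_succ_le fun k => by rw [hS_succ]; exact hFsub _ (hpS k)
  have hSdiam : ∀ k, diam (S k) ≤ diam Q / 2 ^ k := by
    intro k
    induction k with
    | zero => simp [S]
    | succ k ih =>
      rw [hS_succ, pow_succ, ← div_div]
      exact (hFdiam _ (hpS k)).trans (by gcongr)
  obtain ⟨x, hx⟩ := (hp Q hQ).1.nonempty_iInter_of_sequence_nonempty_isCompact_isClosed S
    (fun k => hSanti k.le_succ) (fun k => (hp _ (hpS k)).2) (fun k => (hp _ (hpS k)).1.isClosed)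
  rw [mem_iInter] at hx
  refine ⟨x, hx 0, fun τ hτ => ?_⟩
  obtain ⟨k, hk⟩ := pow_unbounded_of_one_lt (diam Q / τ) one_lt_two
  refine ⟨S k, hSanti (Nat.zero_le k), hpS k, hx k, (hSdiam k).trans ?_⟩
  rw [div_lt_iff₀ hτ] at hk
  rw [div_le_iff₀ (by positivity)]
  linarith

theorem interior_Icc_pi {ι : Type*} [Finite ι] (a b : ι → ℝ) :
    interior (Icc a b) = univ.pi fun i => Ioo (a i) (b i) := by
  rw [← pi_univ_Icc, interior_pi_set finite_univ]
  simp only [interior_Icc]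

theorem diam_Icc_pi {ι : Type*} [Fintype ι] {a b : ι → ℝ} (h : a ≤ b) :
    diam (Icc a b) = dist a b := by
  refine le_antisymm (diam_le_of_forall_dist_le dist_nonneg fun x hx y hy => ?_)
    (dist_le_diam_of_mem (isBounded_Icc a b) (left_mem_Icc.2 h) (right_mem_Icc.2 h))
  refine (dist_pi_le_iff dist_nonneg).2 fun i => ?_
  calc dist (x i) (y i) ≤ b i - a i :=
        Real.dist_le_of_mem_Icc ⟨hx.1 i, hx.2 i⟩ ⟨hy.1 i, hy.2 i⟩
    _ ≤ dist (b i) (a i) := by rw [Real.dist_eq]; exact le_abs_self _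
    _ ≤ dist a b := dist_comm a b ▸ dist_le_pi_dist b a i

namespace IsBox

variable {Q : Set (Fin n → ℝ)}

theorem isCompact (hQ : IsBox Q) : IsCompact Q := by
  obtain ⟨a, b, -, rfl⟩ := hQ
  exact isCompact_Icc

theorem nonempty (hQ : IsBox Q) : Q.Nonempty := by
  obtain ⟨a, b, hab, rfl⟩ := hQ
  exact nonempty_Icc.2 fun i => (hab i).le

theorem volume_toReal_pos_s3 (hQ : IsBox Q) : 0 < (volume Q).toReal := by
  obtain ⟨a, b, hab, rfl⟩ := hQ
  rw [Real.volume_Icc_pi_toReal fun i => (hab i).le]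
  exact Finset.prod_pos fun i _ => sub_pos.2 (hab i)

theorem interior_ae_eq (hQ : IsBox Q) : interior Q =ᵐ[volume] Q := by
  obtain ⟨a, b, -, rfl⟩ := hQ
  exact interior_ae_eq_of_null_frontier ((convex_Icc a b).addHaar_frontier volume)

end IsBox

theorem setIntegral_eq_sum_of_isBoxPartition {Q : Set (Fin n → ℝ)} {m : ℕ}
    {P : Fin m → Set (Fin n → ℝ)} (hP : IsBoxPartition Q P) {f : (Fin n → ℝ) → ℝ}
    (hf : IntegrableOn f Q) :
    ∫ x in Q, f x = ∑ i, ∫ x in P i, f x := by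
  obtain ⟨hbox, rfl, hdisj⟩ := hP
  rw [integral_iUnion_ae (fun i => (hbox i).isCompact.isClosed.measurableSet.nullMeasurableSet)
    (fun i j hij => (hdisj hij).aedisjoint.congr (hbox i).interior_ae_eq.symm
      (hbox j).interior_ae_eq.symm) hf, tsum_fintype]

namespace IsIntervalFunction

variable {U : Set (Fin n → ℝ)} {Φ Ψ : Set (Fin n → ℝ) → ℝ}

theorem sub (hΦ : IsIntervalFunction U Φ) (hΨ : IsIntervalFunction U Ψ) :
    IsIntervalFunction U (Φ - Ψ) := fun Q hQ hQU m P hP => by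
  simp only [Pi.sub_apply, hΦ Q hQ hQU m P hP, hΨ Q hQ hQU m P hP, Finset.sum_sub_distrib]

theorem apply_eq_sum {ι : Type*} [Fintype ι] (hΦ : IsIntervalFunction U Φ)
    {Q : Set (Fin n → ℝ)} (hQ : IsBox Q) (hQU : Q ⊆ U) {P : ι → Set (Fin n → ℝ)}
    (hbox : ∀ i, IsBox (P i)) (hunion : ⋃ i, P i = Q)
    (hdisj : Pairwise fun i j => Disjoint (interior (P i)) (interior (P j))) :
    Φ Q = ∑ i, Φ (P i) := by
  let e := (Fintype.equivFin ι).symm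
  rw [hΦ Q hQ hQU _ (P ∘ e) ⟨fun k => hbox (e k), by
    rwa [Function.comp_def, e.surjective.iUnion_comp P],
    fun k l hkl => hdisj (e.injective.ne hkl)⟩]
  exact e.sum_comp fun i => Φ (P i)

end IsIntervalFunction

theorem isIntervalFunction_setIntegral {U : Set (Fin n → ℝ)} {f : (Fin n → ℝ) → ℝ}
    (hf : ContinuousOn f U) : IsIntervalFunction U fun Q => ∫ x in Q, f x :=
  fun _ hQ hQU _ _ hP =>
    setIntegral_eq_sum_of_isBoxPartition hP ((hf.mono hQU).integrableOn_compact hQ.isCompact)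

theorem isIntervalFunction_volume (U : Set (Fin n → ℝ)) :
    IsIntervalFunction U fun Q => (volume Q).toReal := by
  simpa [setIntegral_const, measureReal_def] using
    isIntervalFunction_setIntegral (U := U) (f := fun _ => (1 : ℝ)) continuousOn_const

namespace HasBoxDensityAt

variable {U : Set (Fin n → ℝ)} {Φ Ψ : Set (Fin n → ℝ) → ℝ} {L M : ℝ}
  {x : Fin n → ℝ}

theorem sub (hΦ : HasBoxDensityAt U Φ L x) (hΨ : HasBoxDensityAt U Ψ M x) :
    HasBoxDensityAt U (Φ - Ψ) (L - M) x := by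
  intro ε hε
  obtain ⟨τ₁, hτ₁, h₁⟩ := hΦ (ε / 2) (half_pos hε)
  obtain ⟨τ₂, hτ₂, h₂⟩ := hΨ (ε / 2) (half_pos hε)
  refine ⟨min τ₁ τ₂, lt_min hτ₁ hτ₂, fun Q hQ hxQ hQU hdiam => ?_⟩
  have e₁ := h₁ Q hQ hxQ hQU (hdiam.trans (min_le_left _ _))
  have e₂ := h₂ Q hQ hxQ hQU (hdiam.trans (min_le_right _ _))
  calc |(Φ - Ψ) Q / (volume Q).toReal - (L - M)|
      = |(Φ Q / (volume Q).toReal - L) - (Ψ Q / (volume Q).toReal - M)| := by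
        rw [Pi.sub_apply, sub_div]; ring_nf
    _ ≤ ε := (abs_sub _ _).trans (by linarith)

theorem congr (h : HasBoxDensityAt U Φ L x) (hΦΨ : ∀ Q, IsBox Q → Q ⊆ U → Φ Q = Ψ Q) :
    HasBoxDensityAt U Ψ L x := by
  intro ε hε
  obtain ⟨τ, hτ, hΦ⟩ := h ε hε
  exact ⟨τ, hτ, fun Q hQ hxQ hQU hdiam => hΦΨ Q hQ hQU ▸ hΦ Q hQ hxQ hQU hdiam⟩

end HasBoxDensityAt

theorem hasBoxDensityAt_setIntegral {U : Set (Fin n → ℝ)} {f : (Fin n → ℝ) → ℝ}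
    (hf : ContinuousOn f U) {x : Fin n → ℝ} (hx : x ∈ U) :
    HasBoxDensityAt U (fun Q => ∫ y in Q, f y) (f x) x := by
  intro ε hε
  obtain ⟨δ, hδ, hclose⟩ := Metric.continuousWithinAt_iff.1 (hf x hx) ε hε
  refine ⟨δ / 2, half_pos hδ, fun Q hQ hxQ hQU hdiam => ?_⟩
  have hm := hQ.volume_toReal_pos_s3
  have hfin := hQ.isCompact.measure_lt_top (μ := volume)
  have hnear : ∀ y ∈ Q, ‖f y - f x‖ ≤ ε := fun y hy =>
    (hclose (hQU hy) ((dist_le_diam_of_mem hQ.isCompact.isBounded hy hxQ).trans_lt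
      (by linarith))).le
  have hsub : ∫ y in Q, (f y - f x) = (∫ y in Q, f y) - (volume Q).toReal * f x := by
    rw [integral_sub ((hf.mono hQU).integrableOn_compact hQ.isCompact)
      (integrableOn_const hfin.ne),
      setIntegral_const, smul_eq_mul, measureReal_def]
  rw [div_sub' hm.ne', abs_div, abs_of_pos hm, div_le_iff₀ hm, ← hsub, ← Real.norm_eq_abs]
  exact norm_setIntegral_le_of_norm_le_const hfin hnear

def halfBox (a b : Fin n → ℝ) (s : Fin n → Bool) : Set (Fin n → ℝ) :=
  Icc (fun i => if s i then (a i + b i) / 2 else a i)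
    (fun i => if s i then b i else (a i + b i) / 2)

section halfBox

variable {a b : Fin n → ℝ}

theorem isBox_halfBox (h : ∀ i, a i < b i) (s : Fin n → Bool) : IsBox (halfBox a b s) :=
  ⟨_, _, fun i => by have := h i; split_ifs <;> linarith, rfl⟩

theorem halfBox_subset (h : a ≤ b) (s : Fin n → Bool) : halfBox a b s ⊆ Icc a b :=
  Icc_subset_Icc (fun i => by have := h i; dsimp only; split_ifs <;> linarith)
    (fun i => by have := h i; dsimp only; split_ifs <;> linarith)

theorem iUnion_halfBox (h : a ≤ b) : ⋃ s, halfBox a b s = Icc a b := by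
  refine (iUnion_subset (halfBox_subset h)).antisymm fun x hx => mem_iUnion.2 ?_
  refine ⟨fun i => decide ((a i + b i) / 2 ≤ x i), fun i => ?_, fun i => ?_⟩ <;>
    by_cases hi : (a i + b i) / 2 ≤ x i <;>
    simp only [hi, decide_true, decide_false, Bool.false_eq_true, ↓reduceIte]
  all_goals linarith [hx.1 i, hx.2 i]

theorem pairwise_disjoint_interior_halfBox :
    Pairwise fun s t => Disjoint (interior (halfBox a b s)) (interior (halfBox a b t)) := by
  intro s t hst
  obtain ⟨i, hi⟩ := Function.ne_iff.1 hst
  simp only [halfBox, interior_Icc_pi]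
  refine disjoint_left.2 fun x hxs hxt => ?_
  have hs := hxs i (mem_univ i)
  have ht := hxt i (mem_univ i)
  cases hsi : s i <;> cases hti : t i <;>
    simp only [hsi, hti, ne_eq, not_true_eq_false, mem_Ioo, Bool.false_eq_true, ↓reduceIte]
      at hi hs ht
  all_goals linarith [hs.1, hs.2, ht.1, ht.2]

theorem diam_halfBox (h : a ≤ b) (s : Fin n → Bool) :
    diam (halfBox a b s) = diam (Icc a b) / 2 := by
  set lo : Fin n → ℝ := fun i => if s i then (a i + b i) / 2 else a i
  set hi : Fin n → ℝ := fun i => if s i then b i else (a i + b i) / 2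
  have hsub : hi - lo = (2 : ℝ)⁻¹ • (b - a) := by
    ext i
    simp only [hi, lo, Pi.sub_apply, Pi.smul_apply, smul_eq_mul]
    split_ifs <;> ring
  have hle : lo ≤ hi := sub_nonneg.1 (hsub ▸ smul_nonneg (by norm_num) (sub_nonneg.2 h))
  rw [halfBox, diam_Icc_pi hle, diam_Icc_pi h, dist_comm, dist_eq_norm, hsub, norm_smul,
    dist_comm, dist_eq_norm]
  norm_num
  ring

end halfBox

namespace IsIntervalFunction

variable {U : Set (Fin n → ℝ)} {G : Set (Fin n → ℝ) → ℝ}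

theorem exists_mul_volume_le_abs_halfBox (hG : IsIntervalFunction U G) {a b : Fin n → ℝ}
    (hab : ∀ i, a i < b i) (hU : Icc a b ⊆ U) {c : ℝ}
    (hc : c * (volume (Icc a b)).toReal ≤ |G (Icc a b)|) :
    ∃ s, c * (volume (halfBox a b s)).toReal ≤ |G (halfBox a b s)| := by
  have hsum {Ψ : Set (Fin n → ℝ) → ℝ} (hΨ : IsIntervalFunction U Ψ) :
      Ψ (Icc a b) = ∑ s, Ψ (halfBox a b s) :=
    hΨ.apply_eq_sum ⟨a, b, hab, rfl⟩ hU (isBox_halfBox hab)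
      (iUnion_halfBox fun i => (hab i).le) pairwise_disjoint_interior_halfBox
  obtain ⟨s, -, hs⟩ := Finset.exists_le_of_sum_le Finset.univ_nonempty <|
    calc ∑ s, c * (volume (halfBox a b s)).toReal
        = c * (volume (Icc a b)).toReal := by
          rw [← Finset.mul_sum, hsum (isIntervalFunction_volume U)]
      _ ≤ |G (Icc a b)| := hc
      _ ≤ ∑ s, |G (halfBox a b s)| := hsum hG ▸ Finset.abs_sum_le_sum_abs _ _
  exact ⟨s, hs⟩

theorem eq_zero_of_hasBoxDensityAt_zero (hG : IsIntervalFunction U G)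
    (hdens : ∀ x ∈ U, HasBoxDensityAt U G 0 x) {Q : Set (Fin n → ℝ)} (hQ : IsBox Q)
    (hQU : Q ⊆ U) : G Q = 0 := by
  by_contra hne
  set c := |G Q| / (volume Q).toReal
  have hc : 0 < c := div_pos (abs_pos.2 hne) hQ.volume_toReal_pos_s3
  let p (R : Set (Fin n → ℝ)) : Prop := IsBox R ∧ R ⊆ U ∧ c * (volume R).toReal ≤ |G R|
  have hhalf (R) (hR : p R) : ∃ R' ⊆ R, diam R' ≤ diam R / 2 ∧ p R' := by
    obtain ⟨⟨a, b, hab, rfl⟩, hRU, hcR⟩ := hR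
    obtain ⟨s, hs⟩ := hG.exists_mul_volume_le_abs_halfBox hab hRU hcR
    have hle : a ≤ b := fun i => (hab i).le
    exact ⟨halfBox a b s, halfBox_subset hle s, (diam_halfBox hle s).le,
      isBox_halfBox hab s, (halfBox_subset hle s).trans hRU, hs⟩
  have hpQ : p Q := ⟨hQ, hQU, (div_mul_cancel₀ _ hQ.volume_toReal_pos_s3.ne').le⟩
  obtain ⟨x, hxQ, hsmall⟩ :=
    exists_mem_forall_diam_le_of_halving (fun R hR => ⟨hR.1.isCompact, hR.1.nonempty⟩) hhalf hpQ
  obtain ⟨τ, hτ, hGx⟩ := hdens x (hQU hxQ) (c / 2) (half_pos hc)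
  obtain ⟨R, -, ⟨hR, hRU, hcR⟩, hxR, hdiam⟩ := hsmall τ hτ
  have hm := hR.volume_toReal_pos_s3
  have hGR := hGx R hR hxR hRU hdiam
  rw [sub_zero, abs_div, abs_of_pos hm, div_le_iff₀ hm] at hGR
  linarith [mul_lt_mul_of_pos_right (half_lt_self hc) hm]

end IsIntervalFunction

theorem intervalFunction_hasDensity_iff_eq_integral_general {n : ℕ}
    (U : Set (Fin n → ℝ))
    (Φ : Set (Fin n → ℝ) → ℝ) (hΦ : IsIntervalFunction U Φ)
    (f : (Fin n → ℝ) → ℝ) (hf : ContinuousOn f U) :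
    (∀ x ∈ U, HasBoxDensityAt U Φ (f x) x) ↔
      (∀ Q : Set (Fin n → ℝ), IsBox Q → Q ⊆ U → Φ Q = ∫ x in Q, f x) := by
  refine ⟨fun hdens Q hQ hQU => ?_, fun hint x hx =>
    (hasBoxDensityAt_setIntegral hf hx).congr fun Q hQ hQU => (hint Q hQ hQU).symm⟩
  have hG := hΦ.sub (isIntervalFunction_setIntegral hf)
  refine sub_eq_zero.1 (hG.eq_zero_of_hasBoxDensityAt_zero (fun x hx => ?_) hQ hQU)
  simpa using (hdens x hx).sub (hasBoxDensityAt_setIntegral hf hx)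

/-- **Corollary.** For an interval function Φ and a continuous function `f` on an open set
`U ⊆ ℝⁿ`, the following are equivalent: (i) `Φ(Q)/m(Q) → f(x)` as boxes `Q ⊆ U`
containing `x` have diameter tending to `0`, for every `x ∈ U`;
(ii) `Φ(Q) = ∫_Q f(x) dx` for every box `Q ⊆ U`. -/
theorem intervalFunction_hasDensity_iff_eq_integral {n : ℕ}
    (U : Set (Fin n → ℝ)) (hU : IsOpen U)
    (Φ : Set (Fin n → ℝ) → ℝ) (hΦ : IsIntervalFunction U Φ)
    (f : (Fin n → ℝ) → ℝ) (hf : ContinuousOn f U) :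
    (∀ x ∈ U, HasBoxDensityAt U Φ (f x) x) ↔
      (∀ Q : Set (Fin n → ℝ), IsBox Q → Q ⊆ U → Φ Q = ∫ x in Q, f x) :=
  intervalFunction_hasDensity_iff_eq_integral_general U Φ hΦ f hf
end

section
/- Let U be an open set in ℝⁿ and Φ an interval function on U (a real-valued function on closed axis-parallel boxes contained in U that is additive over finite partitions of a box into boxes with pairwise disjoint interiors). Then for every box Q ⊂ U there exists a point p ∈ Q such that D̄_Φ(p) ≥ Φ(Q)/m(Q), i.e. Φ(Q) ≤ D̄_Φ(p)·m(Q), where D̄_Φ is the upper density of Φ. -/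
open MeasureTheory

/-- One bisection step. -/
lemma aux_step {n : ℕ} (U : Set (Fin n → ℝ)) (Φ : Set (Fin n → ℝ) → ℝ)
    (hΦ : IsIntervalFunction U Φ) (a b : Fin n → ℝ) (hab : ∀ i, a i < b i)
    (hsub : Set.Icc a b ⊆ U) :
    ∃ q : (Fin n → ℝ) × (Fin n → ℝ), (∀ i, q.1 i < q.2 i) ∧
      Set.Icc q.1 q.2 ⊆ Set.Icc a b ∧ dist q.1 q.2 ≤ dist a b / 2 ∧
      Φ (Set.Icc a b) / (volume (Set.Icc a b)).toReal ≤
        Φ (Set.Icc q.1 q.2) / (volume (Set.Icc q.1 q.2)).toReal := by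
  classical
  set lo : (Fin n → Bool) → Fin n → ℝ :=
    fun s i => if s i then (a i + b i) / 2 else a i with hlo
  set hi : (Fin n → Bool) → Fin n → ℝ :=
    fun s i => if s i then b i else (a i + b i) / 2 with hhi
  have h1 : ∀ s i, a i ≤ lo s i := by
    intro s i; by_cases h : s i <;> simp [hlo, h] <;> linarith [hab i]
  have h2 : ∀ s i, hi s i ≤ b i := by
    intro s i; by_cases h : s i <;> simp [hhi, h] <;> linarith [hab i]
  have h3 : ∀ s i, lo s i < hi s i := by
    intro s i; by_cases h : s i <;> simp [hlo, hhi, h] <;> linarith [hab i]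
  have h4 : ∀ s i, hi s i - lo s i = (b i - a i) / 2 := by
    intro s i; by_cases h : s i <;> simp [hlo, hhi, h] <;> ring
  have hvol : ∀ s, (volume (Set.Icc (lo s) (hi s))).toReal =
      (∏ i, (b i - a i)) / 2 ^ n := by
    intro s
    rw [Real.volume_Icc_pi_toReal (fun i => (h3 s i).le)]
    rw [Finset.prod_congr rfl (fun i _ => h4 s i), Finset.prod_div_distrib,
      Finset.prod_const]
    simp
  have hVeq : (volume (Set.Icc a b)).toReal = ∏ i, (b i - a i) :=
    Real.volume_Icc_pi_toReal (fun i => (hab i).le)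
  have hVpos : 0 < (volume (Set.Icc a b)).toReal := by
    rw [hVeq]; exact Finset.prod_pos fun i _ => sub_pos.mpr (hab i)
  have hvpos : ∀ s, 0 < (volume (Set.Icc (lo s) (hi s))).toReal := by
    intro s; rw [hvol]
    exact div_pos (hVeq ▸ hVpos) (by positivity)
  set e : Fin (Fintype.card (Fin n → Bool)) ≃ (Fin n → Bool) :=
    (Fintype.equivFin (Fin n → Bool)).symm with he
  set P : Fin (Fintype.card (Fin n → Bool)) → Set (Fin n → ℝ) :=
    fun k => Set.Icc (lo (e k)) (hi (e k)) with hP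
  have hint : ∀ s, interior (Set.Icc (lo s) (hi s)) =
      Set.pi Set.univ fun i => Set.Ioo (lo s i) (hi s i) := by
    intro s
    rw [← Set.pi_univ_Icc, interior_pi_set Set.finite_univ]
    simp [Function.comp]
  have hpart : IsBoxPartition (Set.Icc a b) P := by
    refine ⟨fun k => ⟨lo (e k), hi (e k), h3 _, rfl⟩, ?_, ?_⟩
    · apply Set.Subset.antisymm
      · exact Set.iUnion_subset fun k =>
          Set.Icc_subset_Icc (fun i => h1 _ i) (fun i => h2 _ i)
      · intro x hx
        refine Set.mem_iUnion.mpr ⟨e.symm (fun i => decide ((a i + b i) / 2 ≤ x i)), ?_⟩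
        rw [hP]
        simp only [Equiv.apply_symm_apply]
        constructor
        · intro i
          by_cases h : (a i + b i) / 2 ≤ x i <;> simp [hlo, h]
          exact hx.1 i
        · intro i
          by_cases h : (a i + b i) / 2 ≤ x i <;> simp [hhi, h]
          · exact hx.2 i
          · linarith
    · intro k k' hkk'
      have hst : e k ≠ e k' := fun h => hkk' (e.injective h)
      obtain ⟨i, hi'⟩ := Function.ne_iff.mp hst
      rw [hP]
      simp only
      rw [hint, hint]
      refine Set.disjoint_left.mpr fun x hx hx' => ?_
      have hxi := hx i (Set.mem_univ i)
      have hxi' := hx' i (Set.mem_univ i)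
      rcases Bool.eq_false_or_eq_true (e k i) with h | h <;>
        rcases Bool.eq_false_or_eq_true (e k' i) with h' | h'
      · exact hi' (h.trans h'.symm)
      · simp [hlo, hhi, h, h'] at hxi hxi'; linarith [hxi.2, hxi'.1]
      · simp [hlo, hhi, h, h'] at hxi hxi'; linarith [hxi.1, hxi'.2]
      · exact hi' (h.trans h'.symm)
  have hsum := hΦ (Set.Icc a b) ⟨a, b, hab, rfl⟩ hsub _ P hpart
  have hsum' : Φ (Set.Icc a b) = ∑ s : Fin n → Bool, Φ (Set.Icc (lo s) (hi s)) := by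
    rw [hsum, ← Equiv.sum_comp e fun s => Φ (Set.Icc (lo s) (hi s))]
  set r : ℝ := Φ (Set.Icc a b) / (volume (Set.Icc a b)).toReal with hr
  have key : ∃ s : Fin n → Bool,
      r ≤ Φ (Set.Icc (lo s) (hi s)) / (volume (Set.Icc (lo s) (hi s))).toReal := by
    by_contra hcon
    push_neg at hcon
    have hlt : ∀ s : Fin n → Bool,
        Φ (Set.Icc (lo s) (hi s)) < r * ((∏ i, (b i - a i)) / 2 ^ n) := by
      intro s
      have := (div_lt_iff₀ (hvpos s)).mp (hcon s)
      rwa [hvol s] at this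
    have hsumlt : Φ (Set.Icc a b) <
        ∑ _s : Fin n → Bool, r * ((∏ i, (b i - a i)) / 2 ^ n) := by
      rw [hsum']
      exact Finset.sum_lt_sum_of_nonempty Finset.univ_nonempty fun s _ => hlt s
    rw [Finset.sum_const, Finset.card_univ, Fintype.card_fun] at hsumlt
    simp only [Fintype.card_bool, Fintype.card_fin] at hsumlt
    have : Φ (Set.Icc a b) < r * (∏ i, (b i - a i)) := by
      have h2n : (0:ℝ) < 2 ^ n := by positivity
      calc Φ (Set.Icc a b) < (2 ^ n : ℕ) • (r * ((∏ i, (b i - a i)) / 2 ^ n)) := hsumlt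
        _ = r * (∏ i, (b i - a i)) := by
            push_cast [nsmul_eq_mul]
            field_simp
    rw [hr, ← hVeq, div_mul_cancel₀ _ (ne_of_gt hVpos)] at this
    exact lt_irrefl _ this
  obtain ⟨s, hs⟩ := key
  refine ⟨(lo s, hi s), h3 s, Set.Icc_subset_Icc (fun i => h1 s i) (fun i => h2 s i), ?_, hs⟩
  rw [dist_pi_le_iff (by positivity)]
  intro i
  have hle : dist (a i) (b i) ≤ dist a b := dist_le_pi_dist a b i
  rw [Real.dist_eq] at hle
  rw [Real.dist_eq, abs_sub_comm, abs_of_nonneg (sub_nonneg.mpr (h3 s i).le), h4 s i]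
  rw [abs_sub_comm, abs_of_nonneg (sub_nonneg.mpr (hab i).le)] at hle
  linarith

/-- For every box `Q ⊆ U` there is a point `p ∈ Q` at which the upper density of the
interval function Φ is at least `Φ(Q)/m(Q)`. -/
theorem exists_point_upperDensity_ge {n : ℕ}
    (U : Set (Fin n → ℝ)) (hU : IsOpen U)
    (Φ : Set (Fin n → ℝ) → ℝ) (hΦ : IsIntervalFunction U Φ) :
    ∀ Q : Set (Fin n → ℝ), IsBox Q → Q ⊆ U →
      ∃ p ∈ Q, ((Φ Q / (volume Q).toReal : ℝ) : EReal) ≤ upperDensity U Φ p := by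
  classical
  rintro Q ⟨a, b, hab, rfl⟩ hQU
  have hstep : ∀ p : (Fin n → ℝ) × (Fin n → ℝ), (∀ i, p.1 i < p.2 i) →
      Set.Icc p.1 p.2 ⊆ U →
      ∃ q : (Fin n → ℝ) × (Fin n → ℝ), (∀ i, q.1 i < q.2 i) ∧
        Set.Icc q.1 q.2 ⊆ Set.Icc p.1 p.2 ∧ dist q.1 q.2 ≤ dist p.1 p.2 / 2 ∧
        Φ (Set.Icc p.1 p.2) / (volume (Set.Icc p.1 p.2)).toReal ≤
          Φ (Set.Icc q.1 q.2) / (volume (Set.Icc q.1 q.2)).toReal :=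
    fun p h1 h2 => aux_step U Φ hΦ p.1 p.2 h1 h2
  choose! F hF1 hF2 hF3 hF4 using hstep
  set g : ℕ → (Fin n → ℝ) × (Fin n → ℝ) := fun k => F^[k] (a, b) with hg
  have hg0 : g 0 = (a, b) := rfl
  have hgs : ∀ k, g (k + 1) = F (g k) := fun k => Function.iterate_succ_apply' F k (a, b)
  have inv : ∀ k, (∀ i, (g k).1 i < (g k).2 i) ∧
      Set.Icc (g k).1 (g k).2 ⊆ Set.Icc a b := by
    intro k
    induction k with
    | zero => exact ⟨hab, subset_rfl⟩
    | succ k ih =>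
      have hU' : Set.Icc (g k).1 (g k).2 ⊆ U := ih.2.trans hQU
      rw [hgs]
      exact ⟨hF1 _ ih.1 hU', (hF2 _ ih.1 hU').trans ih.2⟩
  have hvalid : ∀ k i, (g k).1 i < (g k).2 i := fun k => (inv k).1
  have hsubab : ∀ k, Set.Icc (g k).1 (g k).2 ⊆ Set.Icc a b := fun k => (inv k).2
  have hUk : ∀ k, Set.Icc (g k).1 (g k).2 ⊆ U := fun k => (hsubab k).trans hQU
  have hnest : ∀ k, Set.Icc (g (k + 1)).1 (g (k + 1)).2 ⊆ Set.Icc (g k).1 (g k).2 := by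
    intro k; rw [hgs]; exact hF2 _ (hvalid k) (hUk k)
  have hnest' : ∀ k j, k ≤ j → Set.Icc (g j).1 (g j).2 ⊆ Set.Icc (g k).1 (g k).2 := by
    intro k j hkj
    induction j, hkj using Nat.le_induction with
    | base => exact subset_rfl
    | succ j hkj ih => exact (hnest j).trans ih
  have hleftmem : ∀ k, (g k).1 ∈ Set.Icc (g k).1 (g k).2 :=
    fun k => Set.left_mem_Icc.mpr fun i => (hvalid k i).le
  have hdist : ∀ k, dist (g k).1 (g k).2 ≤ dist a b / 2 ^ k := by
    intro k
    induction k with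
    | zero => simp [hg0]
    | succ k ih =>
      have h : dist (g (k + 1)).1 (g (k + 1)).2 ≤ dist (g k).1 (g k).2 / 2 := by
        rw [hgs k]; exact hF3 _ (hvalid k) (hUk k)
      calc dist (g (k + 1)).1 (g (k + 1)).2 ≤ dist (g k).1 (g k).2 / 2 := h
        _ ≤ dist a b / 2 ^ k / 2 := by linarith
        _ = dist a b / 2 ^ (k + 1) := by ring
  have hrat : ∀ k, Φ (Set.Icc a b) / (volume (Set.Icc a b)).toReal ≤
      Φ (Set.Icc (g k).1 (g k).2) / (volume (Set.Icc (g k).1 (g k).2)).toReal := by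
    intro k
    induction k with
    | zero => exact le_refl _
    | succ k ih =>
      refine ih.trans ?_
      rw [hgs k]
      exact hF4 _ (hvalid k) (hUk k)
  have hbdd : ∀ i, BddAbove (Set.range fun k => (g k).1 i) := by
    intro i
    refine ⟨b i, ?_⟩
    rintro _ ⟨k, rfl⟩
    exact ((hsubab k) (hleftmem k)).2 i
  set p : Fin n → ℝ := fun i => ⨆ k, (g k).1 i with hp
  have haleb : ∀ j k i, (g j).1 i ≤ (g k).2 i := by
    intro j k i
    rcases le_total j k with h | h
    · have := ((hnest' j k h) (hleftmem k)).1 i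
      exact this.trans (hvalid k i).le
    · exact ((hnest' k j h) (hleftmem j)).2 i
  have hmem : ∀ k, p ∈ Set.Icc (g k).1 (g k).2 := by
    intro k
    constructor
    · intro i; exact le_ciSup (hbdd i) k
    · intro i; exact ciSup_le fun j => haleb j k i
  have hpQ : p ∈ Set.Icc a b := hsubab 0 (hmem 0)
  refine ⟨p, hpQ, ?_⟩
  rw [upperDensity]
  refine le_iInf fun ε => le_iInf fun hε => ?_
  obtain ⟨k, hk⟩ := pow_unbounded_of_one_lt (dist a b / ε) (one_lt_two (α := ℝ))
  have hdk : dist a b / 2 ^ k ≤ ε := by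
    rw [div_lt_iff₀ hε] at hk
    rw [div_le_iff₀ (by positivity : (0:ℝ) < 2 ^ k)]
    nlinarith
  have hdiam : Metric.diam (Set.Icc (g k).1 (g k).2) ≤ dist (g k).1 (g k).2 := by
    apply Metric.diam_le_of_forall_dist_le dist_nonneg
    intro x hx y hy
    rw [dist_pi_le_iff dist_nonneg]
    intro i
    have hle : dist ((g k).1 i) ((g k).2 i) ≤ dist (g k).1 (g k).2 :=
      dist_le_pi_dist _ _ i
    rw [Real.dist_eq, abs_sub_comm, abs_of_nonneg (sub_nonneg.mpr (hvalid k i).le)] at hle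
    rw [Real.dist_eq, abs_le]
    constructor <;> [skip; skip] <;>
      · have h1 := hx.1 i
        have h2 := hx.2 i
        have h3 := hy.1 i
        have h4 := hy.2 i
        linarith
  have hdiam' : Metric.diam (Set.Icc (g k).1 (g k).2) ≤ ε :=
    hdiam.trans ((hdist k).trans hdk)
  calc ((Φ (Set.Icc a b) / (volume (Set.Icc a b)).toReal : ℝ) : EReal)
      ≤ ((Φ (Set.Icc (g k).1 (g k).2) /
          (volume (Set.Icc (g k).1 (g k).2)).toReal : ℝ) : EReal) :=
        EReal.coe_le_coe_iff.mpr (hrat k)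
    _ ≤ _ := le_iSup₂ (f := fun (Q : Set (Fin n → ℝ))
          (_ : IsBox Q ∧ p ∈ Q ∧ Q ⊆ U ∧ Metric.diam Q ≤ ε) =>
          ((Φ Q / (volume Q).toReal : ℝ) : EReal))
        (Set.Icc (g k).1 (g k).2)
        ⟨⟨(g k).1, (g k).2, hvalid k, rfl⟩, hmem k, hUk k, hdiam'⟩
end

section
/- Let U be an open set in ℝⁿ and Φ an interval function on U (a real-valued function on closed axis-parallel boxes contained in U that is additive over finite partitions of a box into boxes with pairwise disjoint interiors). If the upper density satisfies D̄_Φ(x) ≤ 0 at every point x ∈ U, then Φ(Q) ≤ 0 for every box Q ⊂ U. Likewise, if the lower density satisfies D_Φ(x) ≥ 0 at every point x ∈ U, then Φ(Q) ≥ 0 for every box Q ⊂ U. -/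
open MeasureTheory

open Set

variable {n : ℕ}

lemma stepLemma {U : Set (Fin n → ℝ)} {Φ : Set (Fin n → ℝ) → ℝ}
    (hΦ : IsIntervalFunction U Φ) {a b : Fin n → ℝ} (hab : ∀ i, a i < b i)
    (hsub : Set.Icc a b ⊆ U) {r : ℝ}
    (hr : r * (volume (Set.Icc a b)).toReal ≤ Φ (Set.Icc a b)) :
    ∃ a' b' : Fin n → ℝ, (∀ i, a' i < b' i) ∧ a ≤ a' ∧ b' ≤ b ∧
      (∀ i, b' i - a' i = (b i - a i) / 2) ∧
      r * (volume (Set.Icc a' b')).toReal ≤ Φ (Set.Icc a' b') := by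
  classical
  set c : Fin n → ℝ := fun i => (a i + b i) / 2 with hc
  have hac : ∀ i, a i < c i := fun i => by simp only [hc]; linarith [hab i]
  have hcb : ∀ i, c i < b i := fun i => by simp only [hc]; linarith [hab i]
  set lo : (Fin n → Bool) → Fin n → ℝ := fun s i => if s i then c i else a i with hlo
  set hi : (Fin n → Bool) → Fin n → ℝ := fun s i => if s i then b i else c i with hhi
  have hlohi : ∀ s i, lo s i < hi s i := by
    intro s i; by_cases h : s i <;> simp [hlo, hhi, h, hac i, hcb i]
  have hallo : ∀ s, a ≤ lo s := by
    intro s i; by_cases h : s i <;> simp [hlo, h, (hac i).le]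
  have hhib : ∀ s, hi s ≤ b := by
    intro s i; by_cases h : s i <;> simp [hhi, h, (hcb i).le]
  have hhalf : ∀ s i, hi s i - lo s i = (b i - a i) / 2 := by
    intro s i; by_cases h : s i <;> simp [hlo, hhi, hc, h] <;> ring
  have hint : ∀ s, interior (Set.Icc (lo s) (hi s))
      = Set.pi Set.univ fun i => Set.Ioo (lo s i) (hi s i) := by
    intro s
    rw [← Set.pi_univ_Icc, interior_pi_set Set.finite_univ]
    simp [interior_Icc]
  have hunion : (⋃ s : Fin n → Bool, Set.Icc (lo s) (hi s)) = Set.Icc a b := by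
    apply Set.Subset.antisymm
    · exact Set.iUnion_subset fun s => Set.Icc_subset_Icc (hallo s) (hhib s)
    · intro x hx
      refine Set.mem_iUnion.2 ⟨fun i => decide (c i ≤ x i), ?_, ?_⟩
      · intro i
        by_cases h : c i ≤ x i <;> simp [hlo, h, hx.1 i]
      · intro i
        by_cases h : c i ≤ x i <;> simp [hhi, h, hx.2 i]
        linarith [le_of_not_ge h]
  have hdisj : Pairwise fun s t : Fin n → Bool =>
      Disjoint (interior (Set.Icc (lo s) (hi s))) (interior (Set.Icc (lo t) (hi t))) := by
    intro s t hst
    obtain ⟨i, hi'⟩ := Function.ne_iff.1 hst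
    rw [Set.disjoint_left]
    intro x hxs hxt
    rw [hint] at hxs hxt
    have h1 := hxs i (Set.mem_univ i)
    have h2 := hxt i (Set.mem_univ i)
    rcases Bool.eq_false_or_eq_true (s i) with h | h <;>
      rcases Bool.eq_false_or_eq_true (t i) with h' | h' <;>
        simp [h, h'] at hi' <;> simp [hlo, hhi, h, h'] at h1 h2 <;> linarith [h1.1, h1.2, h2.1, h2.2]
  set e := Fintype.equivFin (Fin n → Bool) with he
  have hpart : IsBoxPartition (Set.Icc a b)
      (fun k => Set.Icc (lo (e.symm k)) (hi (e.symm k))) := by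
    refine ⟨fun k => ⟨lo (e.symm k), hi (e.symm k), hlohi _, rfl⟩, ?_, ?_⟩
    · rw [← hunion]
      exact e.symm.surjective.iUnion_comp fun s => Set.Icc (lo s) (hi s)
    · intro k l hkl
      exact hdisj (fun h => hkl (e.symm.injective h))
  have hsum : Φ (Set.Icc a b) = ∑ s : Fin n → Bool, Φ (Set.Icc (lo s) (hi s)) := by
    rw [hΦ _ ⟨a, b, hab, rfl⟩ hsub _ _ hpart]
    exact Equiv.sum_comp e.symm fun s => Φ (Set.Icc (lo s) (hi s))
  have hvols : ∀ s, (volume (Set.Icc (lo s) (hi s))).toReal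
      = (volume (Set.Icc a b)).toReal / 2 ^ n := by
    intro s
    rw [Real.volume_Icc_pi_toReal (fun i => (hlohi s i).le),
      Real.volume_Icc_pi_toReal (fun i => (hab i).le)]
    calc ∏ i, (hi s i - lo s i) = ∏ i : Fin n, (b i - a i) / 2 := by
          exact Finset.prod_congr rfl fun i _ => hhalf s i
      _ = (∏ i : Fin n, (b i - a i)) / 2 ^ n := by
          rw [Finset.prod_div_distrib]; simp
  have hvolsum : ∑ s : Fin n → Bool, (volume (Set.Icc (lo s) (hi s))).toReal
      = (volume (Set.Icc a b)).toReal := by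
    simp only [hvols, Finset.sum_const, Finset.card_univ, nsmul_eq_mul]
    rw [Fintype.card_fun]
    simp
    field_simp
  have hpig : ∃ s : Fin n → Bool,
      r * (volume (Set.Icc (lo s) (hi s))).toReal ≤ Φ (Set.Icc (lo s) (hi s)) := by
    by_contra hno
    push_neg at hno
    have : Φ (Set.Icc a b) < Φ (Set.Icc a b) := by
      calc Φ (Set.Icc a b) = ∑ s, Φ (Set.Icc (lo s) (hi s)) := hsum
        _ < ∑ s, r * (volume (Set.Icc (lo s) (hi s))).toReal :=
            Finset.sum_lt_sum_of_nonempty Finset.univ_nonempty fun s _ => hno s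
        _ = r * (volume (Set.Icc a b)).toReal := by rw [← Finset.mul_sum, hvolsum]
        _ ≤ Φ (Set.Icc a b) := hr
    exact lt_irrefl _ this
  obtain ⟨s, hs⟩ := hpig
  exact ⟨lo s, hi s, hlohi s, hallo s, hhib s, hhalf s, hs⟩

lemma volIcc {a b : Fin n → ℝ} (hab : ∀ i, a i < b i) :
    0 < (volume (Set.Icc a b)).toReal := by
  rw [Real.volume_Icc_pi_toReal (fun i => (hab i).le)]
  exact Finset.prod_pos fun i _ => sub_pos.2 (hab i)

lemma diamIcc {a b : Fin n → ℝ} (hab : a ≤ b) :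
    Metric.diam (Set.Icc a b) ≤ dist a b := by
  apply Metric.diam_le_of_forall_dist_le dist_nonneg
  intro x hx y hy
  rw [dist_pi_le_iff dist_nonneg]
  intro i
  have h1 := dist_le_pi_dist a b i
  rw [Real.dist_eq] at h1 ⊢
  have hx1 := hx.1 i; have hx2 := hx.2 i
  have hy1 := hy.1 i; have hy2 := hy.2 i
  have : |a i - b i| = b i - a i := by
    rw [abs_sub_comm]; exact abs_of_nonneg (sub_nonneg.2 (hab i))
  rw [this] at h1
  rw [abs_le]; constructor <;> [linarith; linarith]

lemma badPoint {U : Set (Fin n → ℝ)} {Φ : Set (Fin n → ℝ) → ℝ}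
    (hΦ : IsIntervalFunction U Φ) {a b : Fin n → ℝ} (hab : ∀ i, a i < b i)
    (hsub : Set.Icc a b ⊆ U) {r : ℝ}
    (hr : r * (volume (Set.Icc a b)).toReal ≤ Φ (Set.Icc a b)) :
    ∃ x ∈ Set.Icc a b, ∀ ε > 0, ∃ Q' : Set (Fin n → ℝ),
      IsBox Q' ∧ x ∈ Q' ∧ Q' ⊆ U ∧ Metric.diam Q' ≤ ε ∧
        r ≤ Φ Q' / (volume Q').toReal := by
  classical
  set T := {p : (Fin n → ℝ) × (Fin n → ℝ) // (∀ i, p.1 i < p.2 i) ∧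
    Set.Icc p.1 p.2 ⊆ Set.Icc a b ∧
    r * (volume (Set.Icc p.1 p.2)).toReal ≤ Φ (Set.Icc p.1 p.2)} with hT
  have hnext : ∀ p : T, ∃ q : T, p.1.1 ≤ q.1.1 ∧ q.1.2 ≤ p.1.2 ∧
      ∀ i, q.1.2 i - q.1.1 i = (p.1.2 i - p.1.1 i) / 2 := by
    rintro ⟨⟨pa, pb⟩, hp1, hp2, hp3⟩
    obtain ⟨a', b', h1, h2, h3, h4, h5⟩ := stepLemma hΦ hp1 (hp2.trans hsub) hp3
    exact ⟨⟨(a', b'), h1, (Set.Icc_subset_Icc h2 h3).trans hp2, h5⟩, h2, h3, h4⟩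
  choose next hn1 hn2 hn3 using hnext
  set p0 : T := ⟨(a, b), hab, subset_rfl, hr⟩ with hp0
  set seq : ℕ → T := fun k => next^[k] p0 with hseq
  have hsucc : ∀ k, seq (k + 1) = next (seq k) := fun k =>
    Function.iterate_succ_apply' next k p0
  have ham : ∀ i, Monotone fun k => (seq k).1.1 i := by
    intro i
    apply monotone_nat_of_le_succ
    intro k
    rw [hsucc k]
    exact hn1 (seq k) i
  have hbm : ∀ i, Antitone fun k => (seq k).1.2 i := by
    intro i
    apply antitone_nat_of_succ_le
    intro k
    rw [hsucc k]
    exact hn2 (seq k) i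
  have hlt : ∀ k i, (seq k).1.1 i < (seq k).1.2 i := fun k i => (seq k).2.1 i
  have hdiff : ∀ k i, (seq k).1.2 i - (seq k).1.1 i = (b i - a i) / 2 ^ k := by
    intro k
    induction k with
    | zero => intro i; simp [hseq, hp0]
    | succ m ih =>
      intro i
      rw [hsucc m, hn3 (seq m) i, ih i]
      ring
  have hbdd : ∀ i, BddAbove (Set.range fun k => (seq k).1.1 i) := by
    intro i
    refine ⟨b i, ?_⟩
    rintro _ ⟨k, rfl⟩
    have := (seq k).2.2.1 (Set.left_mem_Icc.2 (fun j => (hlt k j).le) : (seq k).1.1 ∈ _)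
    exact this.2 i
  set x : Fin n → ℝ := fun i => ⨆ k, (seq k).1.1 i with hx
  have hxmem : ∀ k, x ∈ Set.Icc (seq k).1.1 (seq k).1.2 := by
    intro k
    constructor
    · intro i
      exact le_ciSup (hbdd i) k
    · intro i
      apply ciSup_le
      intro j
      rcases le_total j k with h | h
      · exact (ham i h).trans (hlt k i).le
      · exact (hlt j i).le.trans (hbm i h)
  have hxab : x ∈ Set.Icc a b := (seq 0).2.2.1 (hxmem 0)
  refine ⟨x, hxab, ?_⟩
  intro ε hε
  obtain ⟨k, hk⟩ := pow_unbounded_of_one_lt (dist a b / ε) (by norm_num : (1:ℝ) < 2)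
  have hdk : dist (seq k).1.1 (seq k).1.2 ≤ dist a b / 2 ^ k := by
    rw [dist_pi_le_iff (div_nonneg dist_nonneg (pow_pos two_pos k).le)]
    intro i
    rw [Real.dist_eq, abs_sub_comm,
      abs_of_nonneg (sub_nonneg.2 (hlt k i).le), hdiff k i]
    gcongr
    calc b i - a i ≤ |a i - b i| := by rw [abs_sub_comm]; exact le_abs_self _
      _ = dist (a i) (b i) := (Real.dist_eq _ _).symm
      _ ≤ dist a b := dist_le_pi_dist a b i
  have hdε : dist a b / 2 ^ k ≤ ε := by
    rw [div_le_iff₀ (pow_pos two_pos k)]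
    rw [div_lt_iff₀ hε] at hk
    linarith [hk]
  refine ⟨Set.Icc (seq k).1.1 (seq k).1.2,
    ⟨(seq k).1.1, (seq k).1.2, hlt k, rfl⟩, hxmem k, (seq k).2.2.1.trans hsub,
    (diamIcc (fun i => (hlt k i).le)).trans (hdk.trans hdε), ?_⟩
  rw [le_div_iff₀ (volIcc (hlt k))]
  exact (seq k).2.2.2


/-- If the upper density of an interval function Φ is `≤ 0` at every point of `U`, then
`Φ(Q) ≤ 0` for every box `Q ⊆ U`; likewise if the lower density is `≥ 0` at every point
of `U`, then `Φ(Q) ≥ 0` for every box `Q ⊆ U`. -/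
theorem intervalFunction_nonpos_of_upperDensity_nonpos {n : ℕ}
    (U : Set (Fin n → ℝ)) (hU : IsOpen U)
    (Φ : Set (Fin n → ℝ) → ℝ) (hΦ : IsIntervalFunction U Φ) :
    ((∀ x ∈ U, upperDensity U Φ x ≤ 0) →
      ∀ Q : Set (Fin n → ℝ), IsBox Q → Q ⊆ U → Φ Q ≤ 0) ∧
    ((∀ x ∈ U, 0 ≤ lowerDensity U Φ x) →
      ∀ Q : Set (Fin n → ℝ), IsBox Q → Q ⊆ U → 0 ≤ Φ Q) := by
  constructor
  · rintro h Q ⟨a, b, hab, rfl⟩ hsub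
    by_contra hpos
    push_neg at hpos
    have hv := volIcc hab
    set r : ℝ := Φ (Set.Icc a b) / (volume (Set.Icc a b)).toReal with hrdef
    have hrpos : 0 < r := div_pos hpos hv
    have hr : r * (volume (Set.Icc a b)).toReal ≤ Φ (Set.Icc a b) := by
      rw [hrdef, div_mul_cancel₀ _ hv.ne']
    obtain ⟨x, hx, hxp⟩ := badPoint hΦ hab hsub hr
    have hub : (r : EReal) ≤ upperDensity U Φ x := by
      refine le_iInf₂ fun ε hε => ?_
      obtain ⟨Q', h1, h2, h3, h4, h5⟩ := hxp ε hε
      refine le_iSup₂_of_le Q' ⟨h1, h2, h3, h4⟩ ?_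
      exact_mod_cast h5
    have := hub.trans (h x (hsub hx))
    rw [← EReal.coe_zero, EReal.coe_le_coe_iff] at this
    linarith
  · rintro h Q ⟨a, b, hab, rfl⟩ hsub
    by_contra hneg
    push_neg at hneg
    have hv := volIcc hab
    set Φ' : Set (Fin n → ℝ) → ℝ := fun S => -Φ S with hΦ'def
    have hΦ' : IsIntervalFunction U Φ' := by
      intro Q hQ hQs m P hP
      simp only [hΦ'def, hΦ Q hQ hQs m P hP]
      rw [Finset.sum_neg_distrib]
    set r : ℝ := -Φ (Set.Icc a b) / (volume (Set.Icc a b)).toReal with hrdef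
    have hrpos : 0 < r := div_pos (by linarith) hv
    have hr : r * (volume (Set.Icc a b)).toReal ≤ Φ' (Set.Icc a b) := by
      rw [hrdef, div_mul_cancel₀ _ hv.ne']
    obtain ⟨x, hx, hxp⟩ := badPoint hΦ' hab hsub hr
    have hlb : lowerDensity U Φ x ≤ ((-r : ℝ) : EReal) := by
      refine iSup₂_le fun ε hε => ?_
      obtain ⟨Q', h1, h2, h3, h4, h5⟩ := hxp ε hε
      refine iInf₂_le_of_le Q' ⟨h1, h2, h3, h4⟩ ?_
      have : Φ Q' / (volume Q').toReal ≤ -r := by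
        rw [le_div_iff₀ (by
          obtain ⟨a', b', hab', rfl⟩ := h1
          exact volIcc hab')] at h5
        simp only [hΦ'def] at h5
        have hvol : 0 < (volume Q').toReal := by
          obtain ⟨a', b', hab', rfl⟩ := h1
          exact volIcc hab'
        rw [div_le_iff₀ hvol]
        linarith
      exact_mod_cast this
    have := (h x (hsub hx)).trans hlb
    rw [← EReal.coe_zero, EReal.coe_le_coe_iff] at this
    linarith
end

section
/- Let T : U → V be a homeomorphism between two open sets in ℝⁿ that is differentiable at every point x ∈ U, and assume that x ↦ |det dT(x)| is Lebesgue integrable on U. Then for every measurable function f : V → [0, +∞] one has ∫_V f(y) dy = ∫_U f(T(x)) |det dT(x)| dx. -/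
open MeasureTheory

/-- **Change of variables.** Let `T : U → V` be a homeomorphism between two open sets in
`ℝⁿ` (a bijection of `U` onto `V`, continuous with continuous inverse `S`) that is
differentiable at every point of `U`, with `x ↦ |det dT(x)|` Lebesgue integrable on `U`.
Then `∫_V f(y) dy = ∫_U f(T(x)) |det dT(x)| dx` for every measurable `f : V → [0,+∞]`. -/
theorem lintegral_eq_lintegral_abs_det_fderiv {n : ℕ}
    (U V : Set (Fin n → ℝ)) (hU : IsOpen U) (hV : IsOpen V)
    (T S : (Fin n → ℝ) → (Fin n → ℝ))
    (hT : Set.BijOn T U V) (hTc : ContinuousOn T U)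
    (hSc : ContinuousOn S V) (hinv : Set.InvOn S T U V)
    (T' : (Fin n → ℝ) → ((Fin n → ℝ) →L[ℝ] (Fin n → ℝ)))
    (hTd : ∀ x ∈ U, HasFDerivAt T (T' x) x)
    (hdet : IntegrableOn (fun x => |(T' x).det|) U volume)
    (f : (Fin n → ℝ) → ENNReal) (hf : Measurable f) :
    ∫⁻ y in V, f y = ∫⁻ x in U, f (T x) * ENNReal.ofReal |(T' x).det| := by
  rw [← hT.image_eq,
    lintegral_image_eq_lintegral_abs_det_fderiv_mul volume hU.measurableSet
      (fun x hx => (hTd x hx).hasFDerivWithinAt) hT.injOn f]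
  simp [mul_comm]
end

section
/- Let T : U → V be a homeomorphism between two open sets in ℝⁿ that is differentiable at every point x ∈ U, and assume that x ↦ |det dT(x)| is Lebesgue integrable on U. Then for every Lebesgue measurable set A ⊂ U, the image T(A) is measurable and m(T(A)) = ∫_A |det dT(x)| dx, where m denotes Lebesgue measure on ℝⁿ. -/
open MeasureTheory

/-- Let `T : U → V` be a homeomorphism between two open sets in `ℝⁿ` (a bijection of `U`
onto `V`, continuous with continuous inverse `S`) that is differentiable at every point
of `U`, with `x ↦ |det dT(x)|` Lebesgue integrable on `U`. Then for every Lebesgue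
measurable `A ⊆ U`, the image `T(A)` is measurable and
`m(T(A)) = ∫_A |det dT(x)| dx`. -/
theorem measure_image_eq_lintegral_abs_det_fderiv {n : ℕ}
    (U V : Set (Fin n → ℝ)) (hU : IsOpen U) (hV : IsOpen V)
    (T S : (Fin n → ℝ) → (Fin n → ℝ))
    (hT : Set.BijOn T U V) (hTc : ContinuousOn T U)
    (hSc : ContinuousOn S V) (hinv : Set.InvOn S T U V)
    (T' : (Fin n → ℝ) → ((Fin n → ℝ) →L[ℝ] (Fin n → ℝ)))
    (hTd : ∀ x ∈ U, HasFDerivAt T (T' x) x)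
    (hdet : IntegrableOn (fun x => |(T' x).det|) U volume) :
    ∀ A : Set (Fin n → ℝ), A ⊆ U → MeasurableSet A →
      MeasurableSet (T '' A) ∧
        volume (T '' A) = ∫⁻ x in A, ENNReal.ofReal |(T' x).det| := by
  intro A hAU hA
  have hinj : Set.InjOn T A := hT.injOn.mono hAU
  have hd : ∀ x ∈ A, HasFDerivWithinAt T (T' x) A x := fun x hx =>
    (hTd x (hAU hx)).hasFDerivWithinAt
  refine ⟨hA.image_of_continuousOn_injOn (hTc.mono hAU) hinj, ?_⟩
  exact (lintegral_abs_det_fderiv_eq_addHaar_image volume hA hd hinj).symm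
end

section
/- Let T : U → V be a homeomorphism between two open sets in ℝⁿ that maps sets of Lebesgue measure zero to sets of Lebesgue measure zero, and suppose T is differentiable at a point p ∈ U. Then the interval function Φ(Q) = m(T(Q)) has density |det dT(p)| at p: for every ε > 0 there is τ > 0 such that |m(T(Q))/m(Q) − |det dT(p)|| ≤ ε for every closed axis-parallel cube Q ⊂ U with p ∈ Q and side length at most τ. -/
/-!
On a cube `Q` of side `δ` containing `p`, `T` differs from the affine map
`A y = T p + T' (y - p)` by at most `η δ` for any prescribed `η > 0` once `δ` is small. So `T(Q)`
lies in a translate of `δ` times the `η`-thickening of `T'([0,1]ⁿ)`, whose volume tends to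
`|det T'|` as `η → 0`: this is the upper bound. For the lower bound (`det T' ≠ 0`, otherwise there
is nothing to prove), `g = A⁻¹ ∘ T` moves the points of `Q` by less than `θ δ`. As `g` is a
homeomorphism onto an open set, the cube `Q` shrunk by `θ δ` is a connected set that meets
`g(int Q)` and misses `g(∂Q)`, hence lies in `g(Q)`; applying `A` gives
`m(T(Q)) ≥ |det T'| ((1 - 2θ) δ)ⁿ`.
-/

open MeasureTheory Set Metric Filter Topology Pointwise

lemma abs_div_sub_le_of_le_of_le {x v d ε : ℝ} (hv : 0 < v) (hlo : (d - ε) * v ≤ x)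
    (hhi : x ≤ (d + ε) * v) : |x / v - d| ≤ ε := by
  rw [abs_sub_le_iff, sub_le_iff_le_add, div_le_iff₀ hv, sub_le_comm, le_div_iff₀ hv]
  constructor <;> linarith

lemma Set.BijOn.isOpen_image_of_invOn {X Y : Type*} [TopologicalSpace X] [TopologicalSpace Y]
    {T : X → Y} {S : Y → X} {U : Set X} {V : Set Y} (hT : BijOn T U V) (hinv : InvOn S T U V)
    (hV : IsOpen V) (hSc : ContinuousOn S V) {O : Set X} (hOU : O ⊆ U) (hO : IsOpen O) :
    IsOpen (T '' O) := by
  rw [← inter_eq_left.2 hOU, hinv.1.image_inter', hT.image_eq, inter_comm]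
  exact hSc.isOpen_inter_preimage hV hO

section Cube

variable {ι : Type*}

lemma norm_sub_le_of_mem_cube [Fintype ι] {a x y : ι → ℝ} {δ : ℝ} (hδ : 0 ≤ δ)
    (hx : x ∈ Icc a fun i => a i + δ) (hy : y ∈ Icc a fun i => a i + δ) :
    ‖x - y‖ ≤ δ := by
  rw [← dist_eq_norm]
  refine (Real.dist_le_of_mem_pi_Icc hx hy).trans ((dist_pi_le_iff hδ).2 fun i => ?_)
  simp [abs_of_nonneg hδ]

lemma volume_Icc_of_forall_sub_eq [Fintype ι] {a b : ι → ℝ} {s : ℝ} (hs : 0 ≤ s)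
    (hab : ∀ i, b i - a i = s) :
    volume (Icc a b) = ENNReal.ofReal (s ^ Fintype.card ι) := by
  simp [Real.volume_Icc_pi, hab, ENNReal.ofReal_pow hs]

lemma inv_smul_sub_mem_unitCube {a x : ι → ℝ} {δ : ℝ} (hδ : 0 < δ)
    (hx : x ∈ Icc a fun i => a i + δ) : δ⁻¹ • (x - a) ∈ Icc (0 : ι → ℝ) 1 := by
  refine ⟨fun i => ?_, fun i => ?_⟩
  · have := hx.1 i
    simp only [Pi.zero_apply, Pi.smul_apply, Pi.sub_apply, smul_eq_mul]
    exact mul_nonneg (inv_nonneg.2 hδ.le) (by linarith)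
  · have := hx.2 i
    simp only [Pi.one_apply, Pi.smul_apply, Pi.sub_apply, smul_eq_mul]
    rw [inv_mul_le_iff₀ hδ]
    linarith

lemma Icc_shrink_subset_image [Fintype ι] {g : (ι → ℝ) → ι → ℝ} {a : ι → ℝ} {δ r : ℝ}
    (hr : 0 < r) (hrδ : 4 * r ≤ δ) (hgc : ContinuousOn g (Icc a fun i => a i + δ))
    (hgo : IsOpen (g '' pi univ fun i => Ioo (a i) (a i + δ)))
    (hg : ∀ x ∈ Icc a (fun i => a i + δ), ‖g x - x‖ < r) :
    Icc (fun i => a i + r) (fun i => a i + δ - r) ⊆ g '' Icc a fun i => a i + δ := by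
  set Q := Icc a fun i => a i + δ
  set O := pi univ fun i => Ioo (a i) (a i + δ)
  have hOQ : O ⊆ Q := fun x hx => ⟨fun i => (hx i trivial).1.le, fun i => (hx i trivial).2.le⟩
  have hcoord : ∀ x ∈ Q, ∀ i, x i - r < g x i ∧ g x i < x i + r := fun x hx i => by
    have := abs_lt.1 ((norm_le_pi_norm (g x - x) i).trans_lt (hg x hx))
    simp only [Pi.sub_apply] at this
    constructor <;> linarith
  set c : ι → ℝ := fun i => a i + δ / 2
  have hcO : c ∈ O := fun i _ => ⟨by simp [c]; linarith, by simp [c]; linarith⟩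
  refine Subset.trans ?_ (image_mono hOQ)
  refine (convex_Icc _ _).isPreconnected.subset_of_closure_inter_subset hgo
    ⟨g c, ⟨fun i => ?_, fun i => ?_⟩, c, hcO, rfl⟩ ?_
  · have := (hcoord c (hOQ hcO) i).1
    simp only [c] at this ⊢
    linarith
  · have := (hcoord c (hOQ hcO) i).2
    simp only [c] at this ⊢
    linarith
  · rintro _ ⟨hy, hyK⟩
    have hclosed : IsClosed (g '' Q) := (isCompact_Icc.image_of_continuousOn hgc).isClosed
    obtain ⟨x, hx, rfl⟩ := closure_minimal (image_mono hOQ) hclosed hy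
    refine ⟨x, fun i _ => ⟨?_, ?_⟩, rfl⟩
    · linarith [hyK.1 i, hcoord x hx i]
    · linarith [hyK.2 i, hcoord x hx i]

end Cube

section Derivative

variable {ι : Type*} [Fintype ι] {T : (ι → ℝ) → ι → ℝ} {T' : (ι → ℝ) →L[ℝ] ι → ℝ}
  {p : ι → ℝ}

lemma HasFDerivAt.exists_norm_sub_le_on_cube (hTd : HasFDerivAt T T' p) {η : ℝ} (hη : 0 < η) :
    ∃ τ > 0, ∀ (a : ι → ℝ) (δ : ℝ), 0 < δ → δ ≤ τ → p ∈ Icc a (fun i => a i + δ) →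
      ∀ x ∈ Icc a (fun i => a i + δ), ‖T x - T p - T' (x - p)‖ ≤ η * δ := by
  obtain ⟨τ, hτ, happrox⟩ := nhds_basis_closedBall.eventually_iff.1 (hTd.isLittleO.def hη)
  refine ⟨τ, hτ, fun a δ hδ hδτ hp x hx => ?_⟩
  have hxp : ‖x - p‖ ≤ δ := norm_sub_le_of_mem_cube hδ.le hx hp
  calc ‖T x - T p - T' (x - p)‖ ≤ η * ‖x - p‖ :=
        happrox (mem_closedBall_iff_norm.2 (hxp.trans hδτ))
    _ ≤ η * δ := by gcongr

lemma image_cube_subset_vadd_smul {a c : ι → ℝ} {δ η : ℝ} (hδ : 0 < δ)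
    (hT : ∀ x ∈ Icc a (fun i => a i + δ), ‖T x - c - T' (x - a)‖ ≤ η * δ) :
    T '' Icc a (fun i => a i + δ) ⊆ c +ᵥ δ • (T' '' Icc 0 1 + closedBall 0 η) := by
  rintro _ ⟨x, hx, rfl⟩
  refine ⟨δ • (T' (δ⁻¹ • (x - a)) + δ⁻¹ • (T x - c - T' (x - a))), smul_mem_smul_set
    (add_mem_add (mem_image_of_mem _ (inv_smul_sub_mem_unitCube hδ hx)) ?_), ?_⟩
  · rw [mem_closedBall_zero_iff, norm_smul, Real.norm_eq_abs, abs_of_pos (inv_pos.2 hδ),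
      inv_mul_le_iff₀ hδ, mul_comm]
    exact hT x hx
  · simp only [vadd_eq_add, smul_add, map_smul, smul_smul, mul_inv_cancel₀ hδ.ne', one_smul]
    abel

theorem HasFDerivAt.exists_volume_image_cube_le (hTd : HasFDerivAt T T' p) {ε : ℝ}
    (hε : 0 < ε) :
    ∃ τ > 0, ∀ (a : ι → ℝ) (δ : ℝ), 0 < δ → δ ≤ τ → p ∈ Icc a (fun i => a i + δ) →
      volume (T '' Icc a fun i => a i + δ) ≤
        ENNReal.ofReal ((|T'.det| + ε) * δ ^ Fintype.card ι) := by
  set K := T' '' Icc (0 : ι → ℝ) 1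
  have hK : IsCompact K := isCompact_Icc.image T'.continuous
  have hKvol : volume K < ENNReal.ofReal (|T'.det| + ε) := by
    simp only [K, Measure.addHaar_image_continuousLinearMap, Real.volume_Icc_pi, Pi.one_apply,
      Pi.zero_apply, sub_zero, ENNReal.ofReal_one, Finset.prod_const_one, mul_one]
    exact (ENNReal.ofReal_lt_ofReal_iff (by positivity)).2 (by linarith)
  obtain ⟨η, hηK, hη⟩ : ∃ η, volume (cthickening η K) < ENNReal.ofReal (|T'.det| + ε) ∧ 0 < η :=
    ((((tendsto_measure_cthickening_of_isCompact hK).eventually_lt_const hKvol).filter_mono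
      (nhdsWithin_le_nhds (s := Ioi 0))).and self_mem_nhdsWithin).exists
  obtain ⟨τ, hτ, happrox⟩ := hTd.exists_norm_sub_le_on_cube hη
  refine ⟨τ, hτ, fun a δ hδ hδτ hp => ?_⟩
  have hsub := image_cube_subset_vadd_smul (c := T p + T' (a - p)) hδ fun x hx => by
    have : T x - (T p + T' (a - p)) - T' (x - a) = T x - T p - T' (x - p) := by
      rw [← sub_add_sub_cancel x a p, map_add]
      abel
    rw [this]
    exact happrox a δ hδ hδτ hp x hx
  calc volume (T '' Icc a fun i => a i + δ)
      ≤ volume ((T p + T' (a - p)) +ᵥ δ • (K + closedBall 0 η)) := measure_mono hsub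
    _ = ENNReal.ofReal (δ ^ Fintype.card ι) * volume (cthickening η K) := by
      rw [measure_vadd, Measure.addHaar_smul, hK.add_closedBall_zero hη.le,
        Module.finrank_fintype_fun_eq_card, _root_.abs_of_pos (pow_pos hδ _)]
    _ ≤ ENNReal.ofReal (δ ^ Fintype.card ι) * ENNReal.ofReal (|T'.det| + ε) := by gcongr
    _ = ENNReal.ofReal ((|T'.det| + ε) * δ ^ Fintype.card ι) := by
      rw [← ENNReal.ofReal_mul (by positivity), mul_comm]

variable {U V : Set (ι → ℝ)} {S : (ι → ℝ) → ι → ℝ}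

theorem HasFDerivAt.exists_volume_image_cube_ge_of_det_ne_zero (hTd : HasFDerivAt T T' p)
    (hV : IsOpen V) (hT : BijOn T U V) (hTc : ContinuousOn T U) (hSc : ContinuousOn S V)
    (hinv : InvOn S T U V) (hdet : T'.det ≠ 0) {θ : ℝ} (hθ : 0 < θ) (hθ4 : θ ≤ 1 / 4) :
    ∃ τ > 0, ∀ (a : ι → ℝ) (δ : ℝ), 0 < δ → δ ≤ τ → p ∈ Icc a (fun i => a i + δ) →
      Icc a (fun i => a i + δ) ⊆ U →
      ENNReal.ofReal (|T'.det| * ((1 - 2 * θ) * δ) ^ Fintype.card ι) ≤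
        volume (T '' Icc a fun i => a i + δ) := by
  set L := T'.toContinuousLinearEquivOfDetNeZero hdet
  set M := ‖(L.symm : (ι → ℝ) →L[ℝ] ι → ℝ)‖
  obtain ⟨τ, hτ, happrox⟩ := hTd.exists_norm_sub_le_on_cube (η := θ / (M + 1)) (by positivity)
  refine ⟨τ, hτ, fun a δ hδ hδτ hp hQU => ?_⟩
  set g : (ι → ℝ) → ι → ℝ := fun x => p + L.symm (T x - T p)
  have hL : ∀ z, T' (L.symm z) = z := L.apply_symm_apply
  have hTg : ∀ x, T' (g x) = T' p + (T x - T p) := fun x => by rw [map_add, hL]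
  have hgc : ContinuousOn g (Icc a fun i => a i + δ) := continuousOn_const.add
    (L.symm.continuous.comp_continuousOn ((hTc.mono hQU).sub continuousOn_const))
  have hgo : IsOpen (g '' pi univ fun i => Ioo (a i) (a i + δ)) := by
    rw [show g = (fun z => p + L.symm (z - T p)) ∘ T from rfl, image_comp]
    refine ((Homeomorph.addLeft p).isOpenMap.comp
      (L.symm.toHomeomorph.isOpenMap.comp (Homeomorph.subRight (T p)).isOpenMap)) _ ?_
    refine hT.isOpen_image_of_invOn hinv hV hSc (Subset.trans (fun x hx => ?_) hQU)
      (isOpen_set_pi finite_univ fun _ _ => isOpen_Ioo)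
    exact ⟨fun i => (hx i trivial).1.le, fun i => (hx i trivial).2.le⟩
  have hg : ∀ x ∈ Icc a (fun i => a i + δ), ‖g x - x‖ < θ * δ := fun x hx => by
    have : g x - x = L.symm (T x - T p - T' (x - p)) := by
      rw [map_sub, show L.symm (T' (x - p)) = x - p from L.symm_apply_apply _]
      simp only [g]
      abel
    calc ‖g x - x‖ ≤ M * ‖T x - T p - T' (x - p)‖ := by
          rw [this]; exact (L.symm : (ι → ℝ) →L[ℝ] ι → ℝ).le_opNorm _
      _ ≤ M * (θ / (M + 1) * δ) := by gcongr; exact happrox a δ hδ hδτ hp x hx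
      _ = θ * δ * (M / (M + 1)) := by ring
      _ < θ * δ :=
        mul_lt_of_lt_one_right (by positivity) ((div_lt_one (by positivity)).2 (by linarith))
  have hsub : (T p - T' p) +ᵥ T' '' Icc (fun i => a i + θ * δ) (fun i => a i + δ - θ * δ) ⊆
      T '' Icc a fun i => a i + δ := by
    rintro _ ⟨_, ⟨y, hy, rfl⟩, rfl⟩
    obtain ⟨x, hx, rfl⟩ := Icc_shrink_subset_image (by positivity) (by nlinarith) hgc hgo hg hy
    exact ⟨x, hx, by simp only [vadd_eq_add, hTg]; abel⟩
  calc ENNReal.ofReal (|T'.det| * ((1 - 2 * θ) * δ) ^ Fintype.card ι)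
      = volume ((T p - T' p) +ᵥ
          T' '' Icc (fun i => a i + θ * δ) (fun i => a i + δ - θ * δ)) := by
        rw [measure_vadd, Measure.addHaar_image_continuousLinearMap,
          volume_Icc_of_forall_sub_eq (s := (1 - 2 * θ) * δ) (by nlinarith) (fun i => by ring),
          ENNReal.ofReal_mul (abs_nonneg _)]
    _ ≤ volume (T '' Icc a fun i => a i + δ) := measure_mono hsub

theorem HasFDerivAt.exists_volume_image_cube_ge (hTd : HasFDerivAt T T' p) (hV : IsOpen V)
    (hT : BijOn T U V) (hTc : ContinuousOn T U) (hSc : ContinuousOn S V)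
    (hinv : InvOn S T U V) {ε : ℝ} (hε : 0 < ε) :
    ∃ τ > 0, ∀ (a : ι → ℝ) (δ : ℝ), 0 < δ → δ ≤ τ → p ∈ Icc a (fun i => a i + δ) →
      Icc a (fun i => a i + δ) ⊆ U →
      ENNReal.ofReal ((|T'.det| - ε) * δ ^ Fintype.card ι) ≤
        volume (T '' Icc a fun i => a i + δ) := by
  set k := Fintype.card ι
  rcases eq_or_ne T'.det 0 with hdet | hdet
  · refine ⟨1, one_pos, fun a δ hδ _ _ _ => ?_⟩
    rw [ENNReal.ofReal_of_nonpos (by rw [hdet, abs_zero, zero_sub]; nlinarith [pow_pos hδ k])]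
    exact zero_le
  obtain ⟨θ, ⟨hθε, hθ4⟩, hθ⟩ :
      ∃ θ, (|T'.det| - ε < |T'.det| * (1 - 2 * θ) ^ k ∧ θ ≤ 1 / 4) ∧ 0 < θ := by
    have hcont : Tendsto (fun θ : ℝ => |T'.det| * (1 - 2 * θ) ^ k) (𝓝 0) (𝓝 |T'.det|) := by
      simpa using (by fun_prop : Continuous fun θ : ℝ => |T'.det| * (1 - 2 * θ) ^ k).tendsto 0
    have hnear : ∀ᶠ θ in 𝓝 0, |T'.det| - ε < |T'.det| * (1 - 2 * θ) ^ k ∧ θ ≤ 1 / 4 :=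
      (hcont.eventually_const_lt (by linarith)).and (eventually_le_nhds (by norm_num))
    exact ((hnear.filter_mono (nhdsWithin_le_nhds (s := Ioi 0))).and self_mem_nhdsWithin).exists
  obtain ⟨τ, hτ, hlower⟩ :=
    hTd.exists_volume_image_cube_ge_of_det_ne_zero hV hT hTc hSc hinv hdet hθ hθ4
  refine ⟨τ, hτ, fun a δ hδ hδτ hp hQU =>
    (ENNReal.ofReal_le_ofReal ?_).trans (hlower a δ hδ hδτ hp hQU)⟩
  rw [mul_pow, ← mul_assoc]
  gcongr

end Derivative

theorem volume_image_hasDensity_abs_det_fderiv_general {n : ℕ}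
    (U V : Set (Fin n → ℝ)) (hV : IsOpen V)
    (T S : (Fin n → ℝ) → (Fin n → ℝ))
    (hT : Set.BijOn T U V) (hTc : ContinuousOn T U)
    (hSc : ContinuousOn S V) (hinv : Set.InvOn S T U V)
    (p : Fin n → ℝ)
    (T' : (Fin n → ℝ) →L[ℝ] (Fin n → ℝ)) (hTd : HasFDerivAt T T' p) :
    ∀ ε > 0, ∃ τ > 0, ∀ (a : Fin n → ℝ) (δ : ℝ), 0 < δ → δ ≤ τ →
      p ∈ Set.Icc a (fun i => a i + δ) → Set.Icc a (fun i => a i + δ) ⊆ U →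
      abs ((volume (T '' Set.Icc a (fun i => a i + δ))).toReal /
          (volume (Set.Icc a (fun i => a i + δ))).toReal - |T'.det|) ≤ ε := by
  intro ε hε
  obtain ⟨τ₁, hτ₁, hupper⟩ := hTd.exists_volume_image_cube_le hε
  obtain ⟨τ₂, hτ₂, hlower⟩ := hTd.exists_volume_image_cube_ge hV hT hTc hSc hinv hε
  refine ⟨min τ₁ τ₂, lt_min hτ₁ hτ₂, fun a δ hδ hδτ hp hQU => ?_⟩
  have hfin : volume (T '' Icc a fun i => a i + δ) ≠ ⊤ :=
    (isCompact_Icc.image_of_continuousOn (hTc.mono hQU)).measure_lt_top.ne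
  simp only [Fintype.card_fin] at hupper hlower
  rw [volume_Icc_of_forall_sub_eq hδ.le fun i => add_sub_cancel_left (a i) δ, Fintype.card_fin,
    ENNReal.toReal_ofReal (by positivity)]
  exact abs_div_sub_le_of_le_of_le (by positivity)
    ((ENNReal.ofReal_le_iff_le_toReal hfin).1
      (hlower a δ hδ (hδτ.trans (min_le_right _ _)) hp hQU))
    (ENNReal.toReal_le_of_le_ofReal (by positivity)
      (hupper a δ hδ (hδτ.trans (min_le_left _ _)) hp))

/-- Let `T : U → V` be a homeomorphism between two open sets in `ℝⁿ` (a bijection of `U`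
onto `V`, continuous with continuous inverse `S`) mapping Lebesgue-null sets to
Lebesgue-null sets, and suppose `T` is differentiable at `p ∈ U` with derivative `T'`.
Then the interval function `Φ(Q) = m(T(Q))` has density `|det dT(p)|` at `p`: for every
`ε > 0` there is `τ > 0` such that `|m(T(Q))/m(Q) − |det dT(p)|| ≤ ε` for every closed
axis-parallel cube `Q ⊆ U` containing `p` of side length at most `τ`. -/
theorem volume_image_hasDensity_abs_det_fderiv {n : ℕ}
    (U V : Set (Fin n → ℝ)) (hU : IsOpen U) (hV : IsOpen V)
    (T S : (Fin n → ℝ) → (Fin n → ℝ))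
    (hT : Set.BijOn T U V) (hTc : ContinuousOn T U)
    (hSc : ContinuousOn S V) (hinv : Set.InvOn S T U V)
    (hnull : ∀ A : Set (Fin n → ℝ), A ⊆ U → volume A = 0 → volume (T '' A) = 0)
    (p : Fin n → ℝ) (hp : p ∈ U)
    (T' : (Fin n → ℝ) →L[ℝ] (Fin n → ℝ)) (hTd : HasFDerivAt T T' p) :
    ∀ ε > 0, ∃ τ > 0, ∀ (a : Fin n → ℝ) (δ : ℝ), 0 < δ → δ ≤ τ →
      p ∈ Set.Icc a (fun i => a i + δ) → Set.Icc a (fun i => a i + δ) ⊆ U →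
      abs ((volume (T '' Set.Icc a (fun i => a i + δ))).toReal /
          (volume (Set.Icc a (fun i => a i + δ))).toReal - |T'.det|) ≤ ε :=
  volume_image_hasDensity_abs_det_fderiv_general U V hV T S hT hTc hSc hinv p T' hTd
end

section
/- Let T : U → V be a homeomorphism between two open sets in ℝⁿ that is differentiable at every point of U, with |det dT| locally integrable on U. Then for every closed axis-parallel cube Q ⊂ U one has the one-sided inequality m(T(Q)) ≤ ∫_Q |det dT(x)| dx, where m denotes Lebesgue measure on ℝⁿ. (This inequality requires only the inclusion of T(Q) in a slightly larger parallelepiped and no use of Brouwer's fixed point theorem.) -/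
open MeasureTheory

/-- Let `T : U → V` be a homeomorphism between two open sets in `ℝⁿ` (a bijection of `U`
onto `V`, continuous with continuous inverse `S`) that is differentiable at every point
of `U`, with `|det dT|` locally integrable on `U`. Then for every closed axis-parallel
cube `Q ⊆ U` one has `m(T(Q)) ≤ ∫_Q |det dT(x)| dx`. -/
theorem volume_image_cube_le_integral_abs_det_fderiv {n : ℕ}
    (U V : Set (Fin n → ℝ)) (hU : IsOpen U) (hV : IsOpen V)
    (T S : (Fin n → ℝ) → (Fin n → ℝ))
    (hT : Set.BijOn T U V) (hTc : ContinuousOn T U)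
    (hSc : ContinuousOn S V) (hinv : Set.InvOn S T U V)
    (T' : (Fin n → ℝ) → ((Fin n → ℝ) →L[ℝ] (Fin n → ℝ)))
    (hTd : ∀ x ∈ U, HasFDerivAt T (T' x) x)
    (hdet : LocallyIntegrableOn (fun x => |(T' x).det|) U volume) :
    ∀ (a : Fin n → ℝ) (δ : ℝ), 0 < δ → Set.Icc a (fun i => a i + δ) ⊆ U →
      volume (T '' Set.Icc a (fun i => a i + δ)) ≤
        ENNReal.ofReal (∫ x in Set.Icc a (fun i => a i + δ), |(T' x).det|) := by
  intro a δ hδ hQU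
  set Q := Set.Icc a (fun i => a i + δ) with hQ
  have hQm : MeasurableSet Q := measurableSet_Icc
  have hcomp : IsCompact Q := isCompact_Icc
  have hint : IntegrableOn (fun x => |(T' x).det|) Q volume :=
    hdet.integrableOn_compact_subset hQU hcomp
  have h1 : volume (T '' Q) ≤ ∫⁻ x in Q, ENNReal.ofReal |(T' x).det| :=
    addHaar_image_le_lintegral_abs_det_fderiv volume hQm
      (fun x hx => ((hTd x (hQU hx)).hasFDerivWithinAt))
  rw [← ofReal_integral_eq_lintegral_ofReal hint
    (Filter.Eventually.of_forall fun x => abs_nonneg _)] at h1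
  exact h1
end

section
/- Let U be an open set in ℝⁿ and F = (F₁,…,Fₙ) a vector field on U that is continuous on U and differentiable at every point of U, and suppose the function div F = Σᵢ DᵢFᵢ is Lebesgue integrable on U. Then for every closed axis-parallel box Q ⊂ U, the flux of F through ∂Q with outward normal equals ∫_Q (D₁F₁ + ⋯ + DₙFₙ)(x) dx; that is, Σⱼ ( ∫_{face xⱼ = bⱼ} Fⱼ dm_{n−1} − ∫_{face xⱼ = aⱼ} Fⱼ dm_{n−1} ) = ∫_Q Σᵢ (∂Fᵢ/∂xᵢ)(x) dx. -/
open MeasureTheory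

/-- The flux of a vector field `F` through the boundary of the closed axis-parallel box
`∏ⱼ [aⱼ, bⱼ] ⊆ ℝⁿ⁺¹` oriented with the outward normal: the sum over the `n+1` pairs of
opposite faces of the integral of the corresponding component of `F` over the top face
(`xⱼ = bⱼ`) minus that over the bottom face (`xⱼ = aⱼ`), each face integral being taken
with respect to `n`-dimensional Lebesgue measure. -/
noncomputable def boxFlux {n : ℕ} (F : (Fin (n + 1) → ℝ) → (Fin (n + 1) → ℝ))
    (a b : Fin (n + 1) → ℝ) : ℝ :=
  ∑ j : Fin (n + 1),
    ((∫ x in Set.Icc (a ∘ j.succAbove) (b ∘ j.succAbove), F (j.insertNth (b j) x) j) -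
     (∫ x in Set.Icc (a ∘ j.succAbove) (b ∘ j.succAbove), F (j.insertNth (a j) x) j))

theorem boxFlux_eq_integral_divergence_general {n : ℕ}
    (U : Set (Fin (n + 1) → ℝ))
    (F : (Fin (n + 1) → ℝ) → (Fin (n + 1) → ℝ))
    (F' : (Fin (n + 1) → ℝ) → ((Fin (n + 1) → ℝ) →L[ℝ] (Fin (n + 1) → ℝ)))
    (hFc : ContinuousOn F U)
    (hFd : ∀ x ∈ U, HasFDerivAt F (F' x) x)
    (hdiv : IntegrableOn (fun x => ∑ i, F' x (Pi.single i 1) i) U volume)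
    (a b : Fin (n + 1) → ℝ) (hab : ∀ i, a i < b i) (hQ : Set.Icc a b ⊆ U) :
    boxFlux F a b = ∫ x in Set.Icc a b, ∑ i, F' x (Pi.single i 1) i := by
  have open_box_subset : (Set.pi Set.univ fun i => Set.Ioo (a i) (b i)) ⊆ Set.Icc a b :=
    (Set.pi_univ_Ioo_subset a b).trans Set.Ioo_subset_Icc_self
  exact (integral_divergence_of_hasFDerivAt_off_countable a b (fun i => (hab i).le) F F' ∅
    Set.countable_empty (hFc.mono hQ) (fun x hx => hFd x (hQ (open_box_subset hx.1)))
    (hdiv.mono_set hQ)).symm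

/-- **Divergence theorem for boxes.** Let `F` be a vector field on an open set
`U ⊆ ℝⁿ⁺¹`, continuous on `U` and differentiable at every point of `U`, with
`div F = Σᵢ DᵢFᵢ` Lebesgue integrable on `U`. Then the flux of `F` through the
boundary of every closed axis-parallel box `Q ⊆ U`, oriented with the outward normal,
equals `∫_Q div F`. -/
theorem boxFlux_eq_integral_divergence {n : ℕ}
    (U : Set (Fin (n + 1) → ℝ)) (hU : IsOpen U)
    (F : (Fin (n + 1) → ℝ) → (Fin (n + 1) → ℝ))
    (F' : (Fin (n + 1) → ℝ) → ((Fin (n + 1) → ℝ) →L[ℝ] (Fin (n + 1) → ℝ)))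
    (hFc : ContinuousOn F U)
    (hFd : ∀ x ∈ U, HasFDerivAt F (F' x) x)
    (hdiv : IntegrableOn (fun x => ∑ i, F' x (Pi.single i 1) i) U volume)
    (a b : Fin (n + 1) → ℝ) (hab : ∀ i, a i < b i) (hQ : Set.Icc a b ⊆ U) :
    boxFlux F a b = ∫ x in Set.Icc a b, ∑ i, F' x (Pi.single i 1) i :=
  boxFlux_eq_integral_divergence_general U F F' hFc hFd hdiv a b hab hQ
end

section
/- Let U be an open set in ℝⁿ and F = (F₁,…,Fₙ) a vector field on U that is differentiable at a point p ∈ U (and continuous on U). Then the flux interval function Φ(Q) = flux of F through ∂Q with outward normal has density (D₁F₁ + ⋯ + DₙFₙ)(p) at p: for closed axis-parallel cubes Q ⊂ U containing p of side δ, Φ(Q) = (Σᵢ DᵢFᵢ)(p)·m(Q) + o(m(Q)) as δ → 0. -/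
open MeasureTheory

/-!
Split `F = G + A`, where `A y = F p + F' (y - p)` is the first-order Taylor polynomial of `F`
at `p`. For an affine field the integrands on the faces `xⱼ = bⱼ` and `xⱼ = aⱼ` differ by the
constant `(bⱼ - aⱼ) (F' eⱼ)ⱼ`, so the flux of `A` through any box is exactly `(Σⱼ (F' eⱼ)ⱼ) m(Q)`.
Given `c > 0`, differentiability gives `‖G‖ ≤ c δ` on every small cube of side `δ` containing `p`,
so the flux of `G` through its `2(n+1)` faces of measure `δⁿ` is at most `2(n+1) c δⁿ⁺¹`.
-/

open Set

section Cube

variable {ι : Type*} [Fintype ι] {a : ι → ℝ} {δ : ℝ}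

theorem volume_Icc_add_const_toReal (hδ : 0 ≤ δ) :
    (volume (Icc a fun i => a i + δ)).toReal = δ ^ Fintype.card ι := by
  rw [Real.volume_Icc_pi_toReal fun i => le_add_of_nonneg_right hδ]
  simp

theorem dist_le_of_mem_Icc_add_const (hδ : 0 ≤ δ) {x y : ι → ℝ}
    (hx : x ∈ Icc a fun i => a i + δ) (hy : y ∈ Icc a fun i => a i + δ) : dist x y ≤ δ :=
  (dist_pi_le_iff hδ).2 fun i =>
    (Real.dist_le_of_mem_Icc ⟨hx.1 i, hx.2 i⟩ ⟨hy.1 i, hy.2 i⟩).trans (add_sub_cancel_left _ _).le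

end Cube

section Faces

variable {n : ℕ} {a b : Fin (n + 1) → ℝ} {F G : (Fin (n + 1) → ℝ) → (Fin (n + 1) → ℝ)}

theorem volume_Icc_toReal_eq_sub_mul_succAbove (hab : a ≤ b) (j : Fin (n + 1)) :
    (volume (Icc a b)).toReal =
      (b j - a j) * (volume (Icc (a ∘ j.succAbove) (b ∘ j.succAbove))).toReal := by
  rw [Real.volume_Icc_pi_toReal hab, Fin.prod_univ_succAbove _ j,
    Real.volume_Icc_pi_toReal (a := a ∘ j.succAbove) (b := b ∘ j.succAbove) fun i => hab _]
  rfl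

theorem ContinuousOn.integrableOn_Icc_comp_insertNth (hF : ContinuousOn F (Icc a b))
    {j : Fin (n + 1)} {t : ℝ} (ht : t ∈ Icc (a j) (b j)) :
    IntegrableOn (fun x => F (j.insertNth t x) j) (Icc (a ∘ j.succAbove) (b ∘ j.succAbove)) :=
  ContinuousOn.integrableOn_compact isCompact_Icc <|
    (continuous_apply j).comp_continuousOn <|
      hF.comp (continuous_const.finInsertNth j continuous_id :
        Continuous fun x => Fin.insertNth (α := fun _ => ℝ) j t x).continuousOn
        fun _ hx => Fin.insertNth_mem_Icc.2 ⟨ht, hx⟩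

theorem boxFlux_add (hab : a ≤ b) (hF : ContinuousOn F (Icc a b))
    (hG : ContinuousOn G (Icc a b)) :
    boxFlux (F + G) a b = boxFlux F a b + boxFlux G a b := by
  rw [boxFlux, boxFlux, boxFlux, ← Finset.sum_add_distrib]
  refine Finset.sum_congr rfl fun j _ => ?_
  have hbot : a j ∈ Icc (a j) (b j) := ⟨le_rfl, hab j⟩
  have htop : b j ∈ Icc (a j) (b j) := ⟨hab j, le_rfl⟩
  simp only [Pi.add_apply]
  rw [integral_add (hF.integrableOn_Icc_comp_insertNth htop)
      (hG.integrableOn_Icc_comp_insertNth htop),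
    integral_add (hF.integrableOn_Icc_comp_insertNth hbot)
      (hG.integrableOn_Icc_comp_insertNth hbot)]
  ring

theorem boxFlux_affine (hab : a ≤ b) (v q : Fin (n + 1) → ℝ)
    (L : (Fin (n + 1) → ℝ) →L[ℝ] (Fin (n + 1) → ℝ)) :
    boxFlux (fun y => v + L (y - q)) a b =
      (∑ i, L (Pi.single i 1) i) * (volume (Icc a b)).toReal := by
  rw [boxFlux, Finset.sum_mul]
  refine Finset.sum_congr rfl fun j _ => ?_
  have hA : ContinuousOn (fun y => v + L (y - q)) (Icc a b) := by fun_prop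
  have face_diff (x : Fin n → ℝ) :
      (v + L (j.insertNth (b j) x - q)) j - (v + L (j.insertNth (a j) x - q)) j =
        (b j - a j) * L (Pi.single j 1) j := by
    have hins : j.insertNth (b j) x - j.insertNth (a j) x = (b j - a j) • Pi.single j 1 := by
      rw [← Fin.insertNth_sub, sub_self, Fin.insertNth_zero_right, ← Pi.single_smul, smul_eq_mul,
        mul_one]
    have hL := congrFun (congrArg L hins) j
    simp only [map_sub, map_smul, Pi.sub_apply, Pi.smul_apply, smul_eq_mul] at hL
    simp only [map_sub, Pi.add_apply, Pi.sub_apply]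
    linarith
  rw [← integral_sub (hA.integrableOn_Icc_comp_insertNth ⟨hab j, le_rfl⟩)
      (hA.integrableOn_Icc_comp_insertNth ⟨le_rfl, hab j⟩),
    setIntegral_congr_fun measurableSet_Icc fun x _ => face_diff x, setIntegral_const,
    smul_eq_mul, measureReal_def, volume_Icc_toReal_eq_sub_mul_succAbove hab j]
  ring

theorem abs_boxFlux_le (hab : a ≤ b) {M : ℝ} (hM : ∀ y ∈ Icc a b, ‖F y‖ ≤ M) :
    |boxFlux F a b| ≤
      2 * M * ∑ j : Fin (n + 1), (volume (Icc (a ∘ j.succAbove) (b ∘ j.succAbove))).toReal := by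
  have face_le (j : Fin (n + 1)) {t : ℝ} (ht : t ∈ Icc (a j) (b j)) :
      |∫ x in Icc (a ∘ j.succAbove) (b ∘ j.succAbove), F (j.insertNth t x) j| ≤
        M * (volume (Icc (a ∘ j.succAbove) (b ∘ j.succAbove))).toReal := by
    rw [← measureReal_def, ← Real.norm_eq_abs]
    exact norm_setIntegral_le_of_norm_le_const isCompact_Icc.measure_lt_top fun x hx =>
      (norm_le_pi_norm _ j).trans (hM _ (Fin.insertNth_mem_Icc.2 ⟨ht, hx⟩))
  rw [Finset.mul_sum]
  refine (Finset.abs_sum_le_sum_abs _ _).trans (Finset.sum_le_sum fun j _ => ?_)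
  have htop := face_le j ⟨hab j, le_rfl⟩
  have hbot := face_le j ⟨le_rfl, hab j⟩
  linarith [abs_sub (∫ x in Icc (a ∘ j.succAbove) (b ∘ j.succAbove), F (j.insertNth (b j) x) j)
    (∫ x in Icc (a ∘ j.succAbove) (b ∘ j.succAbove), F (j.insertNth (a j) x) j)]

theorem abs_boxFlux_cube_le {M δ : ℝ} (hδ : 0 ≤ δ)
    (hM : ∀ y ∈ Icc a (fun i => a i + δ), ‖F y‖ ≤ M) :
    |boxFlux F a (fun i => a i + δ)| ≤ 2 * (n + 1) * M * δ ^ n := by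
  have hface (j : Fin (n + 1)) :
      (volume (Icc (a ∘ j.succAbove) ((fun i => a i + δ) ∘ j.succAbove))).toReal = δ ^ n :=
    (volume_Icc_add_const_toReal (a := a ∘ j.succAbove) hδ).trans
      (congrArg _ (Fintype.card_fin n))
  have := abs_boxFlux_le (fun i => le_add_of_nonneg_right hδ) hM
  simp only [hface, Finset.sum_const, Finset.card_univ, Fintype.card_fin, nsmul_eq_mul] at this
  push_cast at this
  linarith

end Faces

theorem boxFlux_hasDensity_divergence_general {n : ℕ}
    (U : Set (Fin (n + 1) → ℝ))
    (F : (Fin (n + 1) → ℝ) → (Fin (n + 1) → ℝ))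
    (hFc : ContinuousOn F U)
    (p : Fin (n + 1) → ℝ)
    (F' : (Fin (n + 1) → ℝ) →L[ℝ] (Fin (n + 1) → ℝ))
    (hFd : HasFDerivAt F F' p) :
    ∀ ε > 0, ∃ τ > 0, ∀ (a : Fin (n + 1) → ℝ) (δ : ℝ), 0 < δ → δ ≤ τ →
      p ∈ Set.Icc a (fun i => a i + δ) → Set.Icc a (fun i => a i + δ) ⊆ U →
      |boxFlux F a (fun i => a i + δ) /
          (volume (Set.Icc a (fun i => a i + δ))).toReal -
        ∑ i, F' (Pi.single i 1) i| ≤ ε := by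
  intro ε hε
  set c := ε / (2 * (n + 1))
  obtain ⟨r, hr, hremainder⟩ :=
    Metric.eventually_nhds_iff.1 (hFd.isLittleO.def (c := c) (by positivity))
  refine ⟨r / 2, half_pos hr, fun a δ hδ hδr hpQ hQU => ?_⟩
  set G := fun y => F y - F p - F' (y - p)
  have hG_le : ∀ y ∈ Icc a (fun i => a i + δ), ‖G y‖ ≤ c * δ := fun y hy => by
    have hy_dist := dist_le_of_mem_Icc_add_const hδ.le hy hpQ
    calc ‖G y‖ ≤ c * ‖y - p‖ := hremainder (by linarith)
      _ ≤ c * δ := by gcongr; rwa [← dist_eq_norm]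
  have hsplit : boxFlux F a (fun i => a i + δ) = boxFlux G a (fun i => a i + δ) +
      (∑ i, F' (Pi.single i 1) i) * (volume (Icc a fun i => a i + δ)).toReal := by
    have hab : a ≤ fun i => a i + δ := fun i => le_add_of_nonneg_right hδ.le
    have hF : F = G + fun y => F p + F' (y - p) := by ext1 y; simp only [G, Pi.add_apply]; abel
    have hGc : ContinuousOn G (Icc a fun i => a i + δ) := by
      have := hFc.mono hQU
      fun_prop
    rw [← boxFlux_affine hab (F p) p F', ← boxFlux_add hab hGc (by fun_prop), ← hF]
  have hvol : (0 : ℝ) < (volume (Icc a fun i => a i + δ)).toReal := by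
    rw [volume_Icc_add_const_toReal hδ.le]; positivity
  rw [hsplit, add_div, mul_div_cancel_right₀ _ hvol.ne', add_sub_cancel_right, abs_div,
    abs_of_pos hvol, div_le_iff₀ hvol, volume_Icc_add_const_toReal hδ.le, Fintype.card_fin]
  calc _ ≤ 2 * (n + 1) * (c * δ) * δ ^ n := abs_boxFlux_cube_le hδ.le hG_le
    _ = ε * δ ^ (n + 1) := by simp only [c]; field_simp; ring

/-- Let `F` be a vector field on an open set `U ⊆ ℝⁿ⁺¹`, continuous on `U` and
differentiable at `p ∈ U` with derivative `F'`. Then the flux interval function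
`Φ(Q) = flux of F through ∂Q` has density `(Σᵢ DᵢFᵢ)(p)` at `p`: for every `ε > 0`
there is `τ > 0` such that `|Φ(Q)/m(Q) − (Σᵢ DᵢFᵢ)(p)| ≤ ε` for every closed
axis-parallel cube `Q ⊆ U` containing `p` of side at most `τ`. -/
theorem boxFlux_hasDensity_divergence {n : ℕ}
    (U : Set (Fin (n + 1) → ℝ)) (hU : IsOpen U)
    (F : (Fin (n + 1) → ℝ) → (Fin (n + 1) → ℝ))
    (hFc : ContinuousOn F U)
    (p : Fin (n + 1) → ℝ) (hp : p ∈ U)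
    (F' : (Fin (n + 1) → ℝ) →L[ℝ] (Fin (n + 1) → ℝ))
    (hFd : HasFDerivAt F F' p) :
    ∀ ε > 0, ∃ τ > 0, ∀ (a : Fin (n + 1) → ℝ) (δ : ℝ), 0 < δ → δ ≤ τ →
      p ∈ Set.Icc a (fun i => a i + δ) → Set.Icc a (fun i => a i + δ) ⊆ U →
      |boxFlux F a (fun i => a i + δ) /
          (volume (Set.Icc a (fun i => a i + δ))).toReal -
        ∑ i, F' (Pi.single i 1) i| ≤ ε :=
  boxFlux_hasDensity_divergence_general U F hFc p F' hFd
end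

section
/- Let R = [a,b] × [c,d] be a closed rectangle in ℝ² and let P, Q : U → ℝ be functions on an open neighborhood U of R that are differentiable at every point of U, with Q_x − P_y Lebesgue integrable on R. Then Green's formula holds on R: the line integral of P dx + Q dy over the positively oriented boundary ∂R equals ∫∫_R (Q_x − P_y) dA; explicitly, ∫_a^b (P(x,c) − P(x,d)) dx + ∫_c^d (Q(b,y) − Q(a,y)) dy = ∫∫_R (∂Q/∂x − ∂P/∂y) dA. No separate integrability assumption on Q_x and P_y individually is needed. -/
open MeasureTheory Set

section Slices

variable {E : Type*} [NormedAddCommGroup E] {F : ℝ × ℝ → E} {a b c d : ℝ}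

theorem ContinuousOn.intervalIntegrable_horizontal_slice
    (hF : ContinuousOn F (Icc (a, c) (b, d))) (hab : a ≤ b) {y : ℝ} (hy : y ∈ Icc c d) :
    IntervalIntegrable (fun x => F (x, y)) volume a b := by
  refine (hF.comp (Continuous.prodMk_left y).continuousOn fun x hx => ?_).intervalIntegrable
  rw [uIcc_of_le hab] at hx
  exact ⟨⟨hx.1, hy.1⟩, ⟨hx.2, hy.2⟩⟩

theorem ContinuousOn.intervalIntegrable_vertical_slice
    (hF : ContinuousOn F (Icc (a, c) (b, d))) (hcd : c ≤ d) {x : ℝ} (hx : x ∈ Icc a b) :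
    IntervalIntegrable (fun y => F (x, y)) volume c d := by
  refine (hF.comp (Continuous.prodMk_right x).continuousOn fun y hy => ?_).intervalIntegrable
  rw [uIcc_of_le hcd] at hy
  exact ⟨⟨hx.1, hy.1⟩, ⟨hx.2, hy.2⟩⟩

end Slices

theorem Ioo_prod_Ioo_subset_Icc {α β : Type*} [Preorder α] [Preorder β] {a b : α} {c d : β} :
    Ioo a b ×ˢ Ioo c d ⊆ Icc (a, c) (b, d) :=
  Icc_prod_Icc a b c d ▸ prod_mono Ioo_subset_Icc_self Ioo_subset_Icc_self

theorem green_formula_rect_general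
    (a b c d : ℝ) (hab : a ≤ b) (hcd : c ≤ d)
    (U : Set (ℝ × ℝ)) (hR : Set.Icc (a, c) (b, d) ⊆ U)
    (P Q : ℝ × ℝ → ℝ) (P' Q' : ℝ × ℝ → (ℝ × ℝ →L[ℝ] ℝ))
    (hP : ∀ z ∈ U, HasFDerivAt P (P' z) z)
    (hQ : ∀ z ∈ U, HasFDerivAt Q (Q' z) z)
    (hInt : IntegrableOn (fun z => Q' z (1, 0) - P' z (0, 1))
      (Set.Icc (a, c) (b, d)) volume) :
    (∫ x in a..b, (P (x, c) - P (x, d))) + (∫ y in c..d, (Q (b, y) - Q (a, y))) =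
      ∫ z in Set.Icc (a, c) (b, d), (Q' z (1, 0) - P' z (0, 1)) := by
  have hPc : ContinuousOn P (Icc (a, c) (b, d)) :=
    fun z hz => (hP z (hR hz)).continuousAt.continuousWithinAt
  have hQc : ContinuousOn Q (Icc (a, c) (b, d)) :=
    fun z hz => (hQ z (hR hz)).continuousAt.continuousWithinAt
  -- The divergence theorem for the field `(Q, -P)` is Green's formula for `P dx + Q dy`.
  have divergence := integral_divergence_prod_Icc_of_hasFDerivAt_of_le Q (-P) Q' (-P')
    (a, c) (b, d) ⟨hab, hcd⟩ hQc hPc.neg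
    (fun z hz => hQ z (hR (Ioo_prod_Ioo_subset_Icc hz)))
    (fun z hz => (hP z (hR (Ioo_prod_Ioo_subset_Icc hz))).neg)
    (by simpa only [Pi.neg_apply, neg_apply, ← sub_eq_add_neg] using hInt)
  simp only [Pi.neg_apply, neg_apply, ← sub_eq_add_neg,
    intervalIntegral.integral_neg] at divergence
  rw [divergence,
    intervalIntegral.integral_sub (hPc.intervalIntegrable_horizontal_slice hab (left_mem_Icc.2 hcd))
      (hPc.intervalIntegrable_horizontal_slice hab (right_mem_Icc.2 hcd)),
    intervalIntegral.integral_sub (hQc.intervalIntegrable_vertical_slice hcd (right_mem_Icc.2 hab))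
      (hQc.intervalIntegrable_vertical_slice hcd (left_mem_Icc.2 hab))]
  ring

/-- **Green's formula on a rectangle.** Let `R = [a,b] × [c,d]` and let `P, Q` be
real-valued functions on an open neighborhood `U` of `R`, differentiable at every point
of `U`, with `Q_x − P_y` Lebesgue integrable on `R`. Then
`∫_∂R P dx + Q dy = ∫∫_R (Q_x − P_y) dA`, i.e.
`∫_a^b (P(x,c) − P(x,d)) dx + ∫_c^d (Q(b,y) − Q(a,y)) dy = ∫∫_R (Q_x − P_y) dA`.
No separate integrability assumption on `Q_x` and `P_y` individually is needed. -/
theorem green_formula_rect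
    (a b c d : ℝ) (hab : a ≤ b) (hcd : c ≤ d)
    (U : Set (ℝ × ℝ)) (hU : IsOpen U) (hR : Set.Icc (a, c) (b, d) ⊆ U)
    (P Q : ℝ × ℝ → ℝ) (P' Q' : ℝ × ℝ → (ℝ × ℝ →L[ℝ] ℝ))
    (hP : ∀ z ∈ U, HasFDerivAt P (P' z) z)
    (hQ : ∀ z ∈ U, HasFDerivAt Q (Q' z) z)
    (hInt : IntegrableOn (fun z => Q' z (1, 0) - P' z (0, 1))
      (Set.Icc (a, c) (b, d)) volume) :
    (∫ x in a..b, (P (x, c) - P (x, d))) + (∫ y in c..d, (Q (b, y) - Q (a, y))) =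
      ∫ z in Set.Icc (a, c) (b, d), (Q' z (1, 0) - P' z (0, 1)) :=
  green_formula_rect_general a b c d hab hcd U hR P Q P' Q' hP hQ hInt
end

section
/- Let R = [a,b] × [c,d] be a closed rectangle, identified with a subset of ℂ, and let f : U → ℂ be a function on an open neighborhood U of R that is real-differentiable (differentiable as a map of two real variables) at every point of U, with ∂̄f Lebesgue integrable on R, where ∂̄f = (1/2)(∂f/∂x + i ∂f/∂y). Then the complex line integral of f over the positively oriented boundary ∂R satisfies ∮_{∂R} f(z) dz = 2i ∫∫_R ∂̄f(z) dA(z). -/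
/-!
Mathlib's Green formula for real-differentiable functions on a rectangle
(`Complex.integral_boundary_rect_of_continuousOn_of_hasFDerivAt_real`) expresses the boundary
integral as the iterated integral of `i f_x - f_y = 2i ∂̄f`. Fubini on `ℂ ≃ ℝ × ℝ` turns that
iterated integral into the area integral over the rectangle.
-/

open MeasureTheory Complex Set
open scoped Interval

theorem setIntegral_Icc_reProdIm_Icc_eq_intervalIntegral {E : Type*} [NormedAddCommGroup E]
    [NormedSpace ℝ E] [CompleteSpace E] {a b c d : ℝ} (hab : a ≤ b) (hcd : c ≤ d) {g : ℂ → E}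
    (hg : IntegrableOn g (Icc a b ×ℂ Icc c d)) :
    ∫ z in Icc a b ×ℂ Icc c d, g z = ∫ x in a..b, ∫ y in c..d, g (x + y * I) := by
  have hpre : measurableEquivRealProd.symm ⁻¹' (Icc a b ×ℂ Icc c d) = Icc a b ×ˢ Icc c d := rfl
  have hemb := measurableEquivRealProd.symm.measurableEmbedding
  rw [← (volume_preserving_equiv_real_prod.symm _).setIntegral_preimage_emb hemb, hpre,
    Measure.volume_eq_prod]
  rw [← (volume_preserving_equiv_real_prod.symm _).integrableOn_comp_preimage hemb, hpre,
    Measure.volume_eq_prod] at hg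
  simp only [Function.comp_def] at hg
  rw [setIntegral_prod _ hg, intervalIntegral.integral_of_le hab, ← integral_Icc_eq_integral_Ioc]
  refine setIntegral_congr_fun measurableSet_Icc fun x _ => ?_
  rw [intervalIntegral.integral_of_le hcd, ← integral_Icc_eq_integral_Ioc]
  refine setIntegral_congr_fun measurableSet_Icc fun y _ => ?_
  simp only [measurableEquivRealProd_symm_apply, mk_eq_add_mul_I]

theorem complex_line_integral_boundary_rect_eq_dbar_general
    (a b c d : ℝ) (hab : a ≤ b) (hcd : c ≤ d)
    (U : Set ℂ)
    (hR : {z : ℂ | z.re ∈ Set.Icc a b ∧ z.im ∈ Set.Icc c d} ⊆ U)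
    (f : ℂ → ℂ) (f' : ℂ → (ℂ →L[ℝ] ℂ))
    (hf : ∀ z ∈ U, HasFDerivAt f (f' z) z)
    (hInt : IntegrableOn (fun z => (f' z 1 + Complex.I * f' z Complex.I) / 2)
      {z : ℂ | z.re ∈ Set.Icc a b ∧ z.im ∈ Set.Icc c d} volume) :
    ((∫ x in a..b, f (x + c * Complex.I)) +
        Complex.I * (∫ y in c..d, f (b + y * Complex.I)) -
        (∫ x in a..b, f (x + d * Complex.I)) -
        Complex.I * (∫ y in c..d, f (a + y * Complex.I))) =
      2 * Complex.I *
        ∫ z in {z : ℂ | z.re ∈ Set.Icc a b ∧ z.im ∈ Set.Icc c d},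
          (f' z 1 + Complex.I * f' z Complex.I) / 2 := by
  change _ = 2 * I * ∫ z in Icc a b ×ℂ Icc c d, _
  replace hR : [[a, b]] ×ℂ [[c, d]] ⊆ U := by rwa [uIcc_of_le hab, uIcc_of_le hcd]
  have hdbar (z : ℂ) : I • f' z 1 - f' z I = 2 * I * ((f' z 1 + I * f' z I) / 2) := by
    rw [smul_eq_mul]
    linear_combination (-f' z I) * I_mul_I
  have hInt' : IntegrableOn (fun z => I • f' z 1 - f' z I) (Icc a b ×ℂ Icc c d) := by
    simp_rw [hdbar]
    exact hInt.const_mul (2 * I)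
  have hGreen := integral_boundary_rect_of_continuousOn_of_hasFDerivAt_real f f' ⟨a, c⟩ ⟨b, d⟩
    (fun z hz => (hf z (hR hz)).continuousAt.continuousWithinAt)
    (fun z hz => hf z (hR ⟨Ioo_subset_Icc_self hz.1, Ioo_subset_Icc_self hz.2⟩))
    (by rwa [uIcc_of_le hab, uIcc_of_le hcd])
  rw [← integral_const_mul, ← integral_congr_ae (ae_of_all _ hdbar),
    setIntegral_Icc_reProdIm_Icc_eq_intervalIntegral hab hcd hInt', ← hGreen]
  simp only [smul_eq_mul]
  ring

/-- **Complex Green's formula on a rectangle.** Let `R = [a,b] × [c,d] ⊆ ℂ` and let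
`f : U → ℂ` be real-differentiable at every point of an open neighborhood `U` of `R`,
with `∂̄f = (1/2)(f_x + i f_y)` Lebesgue integrable on `R`. Then the complex line
integral of `f` over the positively oriented boundary `∂R` satisfies
`∮_{∂R} f(z) dz = 2i ∫∫_R ∂̄f dA`. -/
theorem complex_line_integral_boundary_rect_eq_dbar
    (a b c d : ℝ) (hab : a ≤ b) (hcd : c ≤ d)
    (U : Set ℂ) (hU : IsOpen U)
    (hR : {z : ℂ | z.re ∈ Set.Icc a b ∧ z.im ∈ Set.Icc c d} ⊆ U)
    (f : ℂ → ℂ) (f' : ℂ → (ℂ →L[ℝ] ℂ))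
    (hf : ∀ z ∈ U, HasFDerivAt f (f' z) z)
    (hInt : IntegrableOn (fun z => (f' z 1 + Complex.I * f' z Complex.I) / 2)
      {z : ℂ | z.re ∈ Set.Icc a b ∧ z.im ∈ Set.Icc c d} volume) :
    ((∫ x in a..b, f (x + c * Complex.I)) +
        Complex.I * (∫ y in c..d, f (b + y * Complex.I)) -
        (∫ x in a..b, f (x + d * Complex.I)) -
        Complex.I * (∫ y in c..d, f (a + y * Complex.I))) =
      2 * Complex.I *
        ∫ z in {z : ℂ | z.re ∈ Set.Icc a b ∧ z.im ∈ Set.Icc c d},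
          (f' z 1 + Complex.I * f' z Complex.I) / 2 :=
  complex_line_integral_boundary_rect_eq_dbar_general a b c d hab hcd U hR f f' hf hInt
end
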